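/- arXiv:2511.21306 — 3 statements merged into one kernel-verified Lean document; each statement's English description precedes it below -/
import Mathlib

section
/- For all δ, m ≥ 0 there exists M ≥ 1 such that the following holds in the setting below. Assume the Cayley graph Γ(G, K⊔X) is δ-hyperbolic. For all g, h ∈ G, if g lies within distance m of some geodesic in Γ(G, K⊔X) from 1 to gh, then |Φ_C(g) + Φ_C(h) − Φ_C(gh)| ≤ M·C. -/
open Monoid
open scoped Monoid.Coprod

namespace QMExt

section QM

variable {H : Type*} [Group H]

/-- A quasimorphism: a real-valued function with finite defect. -/
def IsQM (φ : H → ℝ) : Prop := ∃ D : ℝ, ∀ g h : H, |φ g + φ h - φ (g * h)| ≤ D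

/-- The defect `D(φ)` of a quasimorphism. -/
noncomputable def qmDefect (φ : H → ℝ) : ℝ :=
  sSup {r : ℝ | ∃ g h : H, r = |φ g + φ h - φ (g * h)|}

/-- An antisymmetric function: `φ(g⁻¹) = -φ(g)`. -/
def IsAntisym (φ : H → ℝ) : Prop := ∀ g : H, φ g⁻¹ = - φ g

end QM

section WordMetric

variable {Q : Type*} [Group Q]

/-- Word length of `q` with respect to the alphabet `S`. -/
noncomputable def wordLenOn (S : Set Q) (q : Q) : ℕ :=
  sInf {n | ∃ l : List Q, (∀ y ∈ l, y ∈ S) ∧ l.prod = q ∧ l.length = n}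

/-- Distance in the Cayley graph of `Q` with respect to the generating set `S`. -/
noncomputable def wordDist (S : Set Q) (g h : Q) : ℝ := (wordLenOn S (g⁻¹ * h) : ℝ)

/-- Gromov product of `x` and `y` at `w` in the Cayley graph. -/
noncomputable def gprod (S : Set Q) (x y w : Q) : ℝ :=
  (wordDist S w x + wordDist S w y - wordDist S x y) / 2

/-- The Cayley graph of `Q` w.r.t. `S` is Gromov δ-hyperbolic (four-point condition). -/
def HypWith (S : Set Q) (δ : ℝ) : Prop :=
  ∀ w x y z : Q, min (gprod S x y w) (gprod S y z w) - δ ≤ gprod S x z w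

end WordMetric

/-- A group is hyperbolic if it has a finite symmetric generating set whose
Cayley graph is Gromov hyperbolic. -/
def IsHyperbolicGroup (Q : Type*) [Group Q] : Prop :=
  ∃ S : Set Q, S.Finite ∧ (∀ s ∈ S, s⁻¹ ∈ S) ∧ Subgroup.closure S = ⊤ ∧
    ∃ δ : ℝ, 0 ≤ δ ∧ HypWith S δ

section Rel

variable {Q : Type*} [Group Q]

/-- `φ : P → ℝ` is `Q`-quasi-invariant. -/
def IsGQuasiInvariant (P : Subgroup Q) (φ : ↥P → ℝ) : Prop :=
  ∃ D : ℝ, ∀ k₁ k₂ : ↥P, IsConj (k₁ : Q) (k₂ : Q) → |φ k₁ - φ k₂| ≤ D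

/-- `D^Q(φ)`, the quasi-invariance defect of `φ : P → ℝ`. -/
noncomputable def invDefect (P : Subgroup Q) (φ : ↥P → ℝ) : ℝ :=
  sSup {r : ℝ | ∃ k₁ k₂ : ↥P, IsConj (k₁ : Q) (k₂ : Q) ∧ r = |φ k₁ - φ k₂|}

/-- A letter of the alphabet `P ⊔ Y`: either a `P`-letter, or a generator `y ∈ Y`
or its formal inverse (marked by the boolean). -/
abbrev RelLetter (P : Subgroup Q) (Y : Set Q) : Type _ := ↥P ⊕ ↥Y × Bool

/-- Evaluation of a letter in the free product `P ∗ F(Y)`. -/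
noncomputable def evalLetter (P : Subgroup Q) (Y : Set Q) :
    RelLetter P Y → (↥P ∗ FreeGroup ↥Y)
  | Sum.inl k => Coprod.inl k
  | Sum.inr (x, true) => Coprod.inr (FreeGroup.of x)
  | Sum.inr (x, false) => (Coprod.inr (FreeGroup.of x))⁻¹

/-- Evaluation of a word on the alphabet `P ⊔ Y` in the free product `P ∗ F(Y)`. -/
noncomputable def evalWord (P : Subgroup Q) (Y : Set Q) (l : List (RelLetter P Y)) :
    ↥P ∗ FreeGroup ↥Y :=
  (l.map (evalLetter P Y)).prod

/-- The projection `η : P ∗ F(Y) → P` killing all `Y`-letters. -/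
noncomputable def eta (P : Subgroup Q) (Y : Set Q) : (↥P ∗ FreeGroup ↥Y) →* ↥P :=
  Coprod.lift (MonoidHom.id ↥P) 1

/-- The evaluation map `θ : P ∗ F(Y) → Q`. -/
noncomputable def theta (P : Subgroup Q) (Y : Set Q) : (↥P ∗ FreeGroup ↥Y) →* Q :=
  Coprod.lift P.subtype (FreeGroup.lift fun y : ↥Y => (y : Q))

/-- Word length `|a|` of `a ∈ P ∗ F(Y)` over the alphabet `P ⊔ Y`. -/
noncomputable def wordLen (P : Subgroup Q) (Y : Set Q) (a : ↥P ∗ FreeGroup ↥Y) : ℕ :=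
  sInf {n | ∃ l : List (RelLetter P Y), evalWord P Y l = a ∧ l.length = n}

/-- `|a|_Y`: the number of `Y`-letters in the normal form of `a`, i.e. the least
number of `Y`-letters in a word over `P ⊔ Y` representing `a`. -/
noncomputable def xLen (P : Subgroup Q) (Y : Set Q) (a : ↥P ∗ FreeGroup ↥Y) : ℕ :=
  sInf {m | ∃ l : List (RelLetter P Y), evalWord P Y l = a ∧ l.countP Sum.isRight = m}

/-- `φ` is `(Q,Y)`-controlled by `f`. -/
def ControlledBy (P : Subgroup Q) (Y : Set Q) (φ : ↥P → ℝ) (f : ℕ → ℝ) : Prop :=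
  ∀ n : ℕ, ∀ a : ↥P ∗ FreeGroup ↥Y, a ∈ (theta P Y).ker → wordLen P Y a ≤ n →
    |φ (eta P Y a)| ≤ f n

/-- `φ` is `(Q,Y)`-controlled. -/
def Controlled (P : Subgroup Q) (Y : Set Q) (φ : ↥P → ℝ) : Prop :=
  ∃ f : ℕ → ℝ, ControlledBy P Y φ f

/-- `φ` is linearly `(Q,Y)`-controlled with constant `C₀`. -/
def LinearlyControlled (P : Subgroup Q) (Y : Set Q) (φ : ↥P → ℝ) (C₀ : ℝ) : Prop :=
  ControlledBy P Y φ (fun n => C₀ * n + C₀)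

/-- `R` is the set of relators of a relative presentation `Q = ⟨P, Y ∣ R_P, R⟩`:
`Y` is a relative generating set and `ker θ` is the normal closure of `R`. -/
def IsRelPresentation (P : Subgroup Q) (Y : Set Q) (R : Set (↥P ∗ FreeGroup ↥Y)) : Prop :=
  Function.Surjective (theta P Y) ∧ Subgroup.normalClosure R = (theta P Y).ker

/-- `f` is a relative isoperimetric function of the relative presentation with relators `R`. -/
def RelIsoperimetricFn (P : Subgroup Q) (Y : Set Q) (R : Set (↥P ∗ FreeGroup ↥Y))
    (f : ℕ → ℝ) : Prop :=
  ∀ n : ℕ, ∀ a ∈ (theta P Y).ker, wordLen P Y a ≤ n →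
    ∃ l : List ((↥P ∗ FreeGroup ↥Y) × (↥P ∗ FreeGroup ↥Y)),
      (∀ p ∈ l, p.2 ∈ R) ∧ (l.map fun p => p.1 * p.2 * p.1⁻¹).prod = a ∧ (l.length : ℝ) ≤ f n

/-- Admissible adjacent pairs in a reduced word: no two adjacent `P`-letters, and no
adjacent pair `y y⁻¹` or `y⁻¹ y` of `Y`-letters. -/
def okPair (P : Subgroup Q) (Y : Set Q) : RelLetter P Y → RelLetter P Y → Prop
  | Sum.inl _, Sum.inl _ => False
  | Sum.inr (x, s), Sum.inr (y, t) => x = y → t ≠ !s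
  | _, _ => True

/-- A reduced word on `P ⊔ Y` (the normal form of the element it represents). -/
def IsReducedWord (P : Subgroup Q) (Y : Set Q) (l : List (RelLetter P Y)) : Prop :=
  (∀ k : ↥P, Sum.inl k ∈ l → k ≠ 1) ∧ l.Chain' (okPair P Y)

/-- The relative presentation with relators `R` is bounded. -/
def BoundedRel (P : Subgroup Q) (Y : Set Q) (R : Set (↥P ∗ FreeGroup ↥Y)) : Prop :=
  ∃ B : ℕ, ∀ r ∈ R, wordLen P Y r ≤ B

/-- The relative presentation with relators `R` is strongly bounded: the relators have
uniformly bounded length and only finitely many `P`-letters occur in them. -/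
def StronglyBoundedRel (P : Subgroup Q) (Y : Set Q) (R : Set (↥P ∗ FreeGroup ↥Y)) : Prop :=
  ∃ B : ℕ, ∃ F : Set ↥P, F.Finite ∧
    ∀ r ∈ R, ∃ l : List (RelLetter P Y), IsReducedWord P Y l ∧ evalWord P Y l = r ∧
      l.length ≤ B ∧ ∀ k : ↥P, Sum.inl k ∈ l → k ∈ F

/-- `P` is hyperbolically embedded in `Q`: there are a symmetric relative generating set and
a strongly bounded relative presentation with a linear relative isoperimetric function. -/
def IsHypEmbedded (P : Subgroup Q) : Prop :=
  ∃ Y : Set Q, (∀ y ∈ Y, y⁻¹ ∈ Y) ∧ ∃ R : Set (↥P ∗ FreeGroup ↥Y),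
    IsRelPresentation P Y R ∧ StronglyBoundedRel P Y R ∧
    ∃ A B : ℝ, RelIsoperimetricFn P Y R (fun n => A * n + B)

/-- `Q` is hyperbolic relative to `P` (Osin): there is a finite relative presentation
with a linear relative isoperimetric function. -/
def IsRelHyperbolic (P : Subgroup Q) : Prop :=
  ∃ Y : Set Q, (∀ y ∈ Y, y⁻¹ ∈ Y) ∧ ∃ R : Set (↥P ∗ FreeGroup ↥Y), R.Finite ∧
    IsRelPresentation P Y R ∧ ∃ A B : ℝ, RelIsoperimetricFn P Y R (fun n => A * n + B)

/-- `L` is a (left) transversal of `P` in `Q`: a set of coset representatives. -/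
def IsTransversal (P : Subgroup Q) (L : Set Q) : Prop :=
  ∀ q : Q, ∃! l : Q, l ∈ L ∧ l⁻¹ * q ∈ P

/-- `φ̃_C(a) := φ̃(a) + C·|a|_Y`. -/
noncomputable def phitC (P : Subgroup Q) (Y : Set Q) (φ : ↥P → ℝ) (C : ℝ)
    (a : ↥P ∗ FreeGroup ↥Y) : ℝ :=
  φ (eta P Y a) + C * (xLen P Y a : ℝ)

/-- `Φ_C(g) := inf { φ̃_C(a) ∣ θ(a) = g }`. -/
noncomputable def PhiC (P : Subgroup Q) (Y : Set Q) (φ : ↥P → ℝ) (C : ℝ) (g : Q) : ℝ :=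
  sInf {r : ℝ | ∃ a : ↥P ∗ FreeGroup ↥Y, theta P Y a = g ∧ r = phitC P Y φ C a}

end Rel

section Quot

/-- Word length of an element of a free group. -/
noncomputable def freeLen {A : Type*} (w : FreeGroup A) : ℕ :=
  sInf {n | ∃ l : List (A × Bool), FreeGroup.mk l = w ∧ l.length = n}

/-- `f` is an isoperimetric function of the presentation of `Q` with generators `A`
(mapped to `Q` by `pr`) and relators `Rb`. -/
def IsoFn {Q : Type*} [Group Q] {A : Type*} (pr : FreeGroup A →* Q)
    (Rb : Set (FreeGroup A)) (f : ℕ → ℝ) : Prop :=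
  ∀ n : ℕ, ∀ w ∈ pr.ker, freeLen w ≤ n →
    ∃ l : List (FreeGroup A × FreeGroup A), (∀ p ∈ l, p.2 ∈ Rb) ∧
      (l.map fun p => p.1 * p.2 * p.1⁻¹).prod = w ∧ (l.length : ℝ) ≤ f n

variable {G : Type*} [Group G]

/-- The set of relators `R = { s(r̄)·k_r⁻¹ }` obtained by lifting the relators `R̄` of a
presentation of `G/K` along the lift `σ` of the generators. -/
def Rlift (K : Subgroup G) {Xbar : Set (G ⧸ K)} (Rbar : Set (FreeGroup ↥Xbar))
    (σ : ↥Xbar → G) : Set (↥K ∗ FreeGroup ↥(Set.range σ)) :=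
  {a | ∃ r ∈ Rbar, ∃ k : ↥K,
    theta K (Set.range σ) (Coprod.inr (FreeGroup.map (Set.rangeFactorization σ) r)) = ↑k ∧
    a = Coprod.inr (FreeGroup.map (Set.rangeFactorization σ) r) * (Coprod.inl k)⁻¹}

/-- The set of relators `T' = { w k w⁻¹ k_w⁻¹ ∣ w ∈ X*, k ∈ K }`. -/
def Tset (K : Subgroup G) (X : Set G) : Set (↥K ∗ FreeGroup ↥X) :=
  {a | ∃ lw : List ↥X, ∃ k k' : ↥K,
    theta K X (Coprod.inr (lw.map FreeGroup.of).prod * Coprod.inl k *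
      (Coprod.inr (lw.map FreeGroup.of).prod)⁻¹) = ↑k' ∧
    a = Coprod.inr (lw.map FreeGroup.of).prod * Coprod.inl k *
      (Coprod.inr (lw.map FreeGroup.of).prod)⁻¹ * (Coprod.inl k')⁻¹}

/-- The set of `(G,K)`-commutators `[g,k]` with `g ∈ G`, `k ∈ K`. -/
def commSet (G : Type*) [Group G] (K : Subgroup G) : Set G :=
  {c | ∃ g : G, ∃ k ∈ K, c = g * k * g⁻¹ * k⁻¹}

/-- Stable word length (e.g. stable (mixed) commutator length) with respect to the
generating set `S`, as the infimum of `|gⁿ|/n`. -/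
noncomputable def sclOn {G : Type*} [Group G] (S : Set G) (g : G) : ℝ :=
  ⨅ n : ℕ+, (wordLenOn S (g ^ (n : ℕ)) : ℝ) / ((n : ℕ) : ℝ)

end Quot

end QMExt
open QMExt

namespace QMAux
open QMExt

open QMExt

variable {G : Type*} [Group G]

def Gen (S : Set G) : Prop := ∀ q : G, ∃ l : List G, (∀ y ∈ l, y ∈ S) ∧ l.prod = q

def Symm (S : Set G) : Prop := ∀ s ∈ S, s⁻¹ ∈ S

lemma wordLenOn_le (S : Set G) {q : G} {l : List G} (hl : ∀ y ∈ l, y ∈ S) (hp : l.prod = q) :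
    wordLenOn S q ≤ l.length := Nat.sInf_le ⟨l, hl, hp, rfl⟩

lemma wordLenOn_one (S : Set G) : wordLenOn S 1 = 0 :=
  Nat.le_zero.mp (wordLenOn_le S (l := []) (by simp) (by simp))

lemma exists_geo (S : Set G) (hgen : Gen S) (q : G) :
    ∃ l : List G, (∀ y ∈ l, y ∈ S) ∧ l.prod = q ∧ l.length = wordLenOn S q := by
  have hne : {n | ∃ l : List G, (∀ y ∈ l, y ∈ S) ∧ l.prod = q ∧ l.length = n}.Nonempty := by
    obtain ⟨l, h1, h2⟩ := hgen q; exact ⟨l.length, l, h1, h2, rfl⟩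
  obtain ⟨l, h1, h2, h3⟩ := Nat.sInf_mem hne
  exact ⟨l, h1, h2, h3⟩

lemma wordLenOn_mul_le (S : Set G) (hgen : Gen S) (a b : G) :
    wordLenOn S (a * b) ≤ wordLenOn S a + wordLenOn S b := by
  obtain ⟨l1, h11, h12, h13⟩ := exists_geo S hgen a
  obtain ⟨l2, h21, h22, h23⟩ := exists_geo S hgen b
  have : wordLenOn S (a * b) ≤ (l1 ++ l2).length := by
    refine wordLenOn_le S (fun y hy => ?_) (by simp [h12, h22])
    rcases List.mem_append.mp hy with h | h
    exacts [h11 y h, h21 y h]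
  simpa [h13, h23] using this

lemma wordLenOn_inv_le (S : Set G) (hS : Symm S) {q : G} {l : List G}
    (hl : ∀ y ∈ l, y ∈ S) (hp : l.prod = q) : wordLenOn S q⁻¹ ≤ l.length := by
  refine le_trans (wordLenOn_le S (l := (l.map fun x => x⁻¹).reverse) ?_ ?_) (by simp)
  · intro y hy
    simp only [List.mem_reverse, List.mem_map] at hy
    obtain ⟨x, hx, rfl⟩ := hy
    exact hS x (hl x hx)
  · rw [← hp, List.prod_inv_reverse]

lemma wordLenOn_inv (S : Set G) (hS : Symm S) (hgen : Gen S) (q : G) :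
    wordLenOn S q⁻¹ = wordLenOn S q := by
  have h1 : ∀ r : G, wordLenOn S r⁻¹ ≤ wordLenOn S r := by
    intro r
    obtain ⟨l, ha, hb, hc⟩ := exists_geo S hgen r
    exact hc ▸ wordLenOn_inv_le S hS ha hb
  refine le_antisymm (h1 q) ?_
  have := h1 q⁻¹; simpa using this

lemma wd_nonneg (S : Set G) (g h : G) : 0 ≤ wordDist S g h := Nat.cast_nonneg _

lemma wd_self (S : Set G) (g : G) : wordDist S g g = 0 := by
  simp [wordDist, wordLenOn_one]

lemma wd_symm (S : Set G) (hS : Symm S) (hgen : Gen S) (g h : G) :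
    wordDist S g h = wordDist S h g := by
  unfold wordDist
  rw [show h⁻¹ * g = (g⁻¹ * h)⁻¹ by group, wordLenOn_inv S hS hgen]

lemma wd_triangle (S : Set G) (hgen : Gen S) (a b c : G) :
    wordDist S a c ≤ wordDist S a b + wordDist S b c := by
  unfold wordDist
  rw [show a⁻¹ * c = (a⁻¹ * b) * (b⁻¹ * c) by group]
  exact_mod_cast wordLenOn_mul_le S hgen _ _

lemma gprod_ge (S : Set G) (hS : Symm S) (hgen : Gen S) (x y z : G) :
    wordDist S z x - wordDist S x y ≤ gprod S x y z := by
  have h1 : wordDist S z x ≤ wordDist S z y + wordDist S y x := wd_triangle S hgen z y x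
  unfold gprod
  rw [wd_symm S hS hgen y x] at h1
  linarith

lemma defect_bound {H : Type*} [Group H] {φ : H → ℝ} (hqm : IsQM φ) (g h : H) :
    |φ g + φ h - φ (g * h)| ≤ qmDefect φ := by
  obtain ⟨D, hD⟩ := hqm
  exact le_csSup ⟨D, fun r ⟨a, b, hr⟩ => hr ▸ hD a b⟩ ⟨g, h, rfl⟩

lemma defect_nonneg {H : Type*} [Group H] {φ : H → ℝ} (hqm : IsQM φ) : 0 ≤ qmDefect φ :=
  (abs_nonneg _).trans (defect_bound hqm 1 1)

/-- The logarithmic subdivision lemma: any point is within `(x·y)_z + δ·n + 1` of any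
path of length `≤ 2^n` from `x` to `y`. -/
lemma loglemma (S : Set G) (hS : Symm S) (hgen : Gen S) {δ : ℝ} (hyp : HypWith S δ) :
    ∀ n : ℕ, ∀ L : ℕ, L ≤ 2 ^ n → ∀ p : ℕ → G,
    (∀ i, i < L → wordDist S (p i) (p (i + 1)) ≤ 1) → ∀ z : G,
    ∃ i, i ≤ L ∧ wordDist S z (p i) ≤ gprod S (p 0) (p L) z + δ * n + 1 := by
  intro n
  induction n with
  | zero =>
    intro L hL p hp z
    refine ⟨0, Nat.zero_le _, ?_⟩
    have h1 : wordDist S z (p 0) - wordDist S (p 0) (p L) ≤ gprod S (p 0) (p L) z :=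
      gprod_ge S hS hgen _ _ _
    have h2 : wordDist S (p 0) (p L) ≤ 1 := by
      interval_cases L
      · rw [wd_self S (p 0)]; norm_num
      · simpa using hp 0 (by norm_num)
    push_cast
    linarith
  | succ n ih =>
    intro L hL p hp z
    set h := L / 2 with hh
    have hh1 : h ≤ 2 ^ n := by
      rw [pow_succ] at hL; omega
    have hh2 : L - h ≤ 2 ^ n := by
      rw [pow_succ] at hL; omega
    have hhL : h ≤ L := Nat.div_le_self _ _
    have h4 := hyp z (p 0) (p h) (p L)
    rcases le_total (gprod S (p 0) (p h) z) (gprod S (p h) (p L) z) with hcase | hcase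
    · -- first half is the min
      obtain ⟨i, hi, hbd⟩ := ih h hh1 p (fun i hi => hp i (lt_of_lt_of_le hi hhL)) z
      refine ⟨i, le_trans hi hhL, ?_⟩
      have hkey : gprod S (p 0) (p h) z ≤ gprod S (p 0) (p L) z + δ := by
        rw [min_eq_left hcase] at h4; linarith
      push_cast
      push_cast at hbd
      linarith
    · -- second half
      obtain ⟨i, hi, hbd⟩ := ih (L - h) hh2 (fun j => p (h + j))
        (fun i hi => by
          have hlt : h + i < L := by omega
          have he2 : h + (i + 1) = (h + i) + 1 := by omega
          show wordDist S (p (h + i)) (p (h + (i + 1))) ≤ 1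
          rw [he2]
          exact hp (h + i) hlt) z
      refine ⟨h + i, by omega, ?_⟩
      have he : h + (L - h) = L := by omega
      simp only [Nat.add_zero] at hbd
      rw [he] at hbd
      have hkey : gprod S (p h) (p L) z ≤ gprod S (p 0) (p L) z + δ := by
        rw [min_eq_right hcase] at h4; linarith
      push_cast
      push_cast at hbd
      linarith


open QMExt

variable {G : Type*} [Group G] (K : Subgroup G) (X : Set G)

lemma evalWord_nil : evalWord K X [] = 1 := rfl

lemma evalWord_cons (A : RelLetter K X) (l : List (RelLetter K X)) :
    evalWord K X (A :: l) = evalLetter K X A * evalWord K X l := by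
  simp [evalWord]

lemma evalWord_append (l₁ l₂ : List (RelLetter K X)) :
    evalWord K X (l₁ ++ l₂) = evalWord K X l₁ * evalWord K X l₂ := by
  simp [evalWord]

lemma eta_evalLetter_inl (k : ↥K) : eta K X (evalLetter K X (Sum.inl k)) = k := by
  simp [evalLetter, eta]

lemma eta_evalLetter_inr (x : ↥X) (b : Bool) :
    eta K X (evalLetter K X (Sum.inr (x, b))) = 1 := by
  cases b <;> simp [evalLetter, eta]

lemma theta_evalLetter_inl (k : ↥K) : theta K X (evalLetter K X (Sum.inl k)) = (k : G) := by
  simp [evalLetter, theta]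

lemma theta_evalLetter_inr_t (x : ↥X) :
    theta K X (evalLetter K X (Sum.inr (x, true))) = (x : G) := by
  simp [evalLetter, theta]

lemma theta_evalLetter_inr_f (x : ↥X) :
    theta K X (evalLetter K X (Sum.inr (x, false))) = (x : G)⁻¹ := by
  simp [evalLetter, theta]

/-- Formal inverse of a letter. -/
def letterInv : RelLetter K X → RelLetter K X
  | Sum.inl k => Sum.inl k⁻¹
  | Sum.inr (x, b) => Sum.inr (x, !b)

lemma evalLetter_letterInv (A : RelLetter K X) :
    evalLetter K X (letterInv K X A) = (evalLetter K X A)⁻¹ := by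
  rcases A with k | ⟨x, b⟩
  · simp [letterInv, evalLetter]
  · cases b <;> simp [letterInv, evalLetter]

lemma isRight_letterInv (A : RelLetter K X) :
    (letterInv K X A).isRight = A.isRight := by
  rcases A with k | ⟨x, b⟩ <;> simp [letterInv]

/-- Formal inverse of a word. -/
def invWord (l : List (RelLetter K X)) : List (RelLetter K X) :=
  (l.map (letterInv K X)).reverse

lemma evalWord_invWord (l : List (RelLetter K X)) :
    evalWord K X (invWord K X l) = (evalWord K X l)⁻¹ := by
  induction l with
  | nil => simp [invWord, evalWord_nil]
  | cons A t ih =>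
    rw [evalWord_cons]
    simp only [invWord, List.map_cons, List.reverse_cons]
    rw [show ((t.map (letterInv K X)).reverse ++ [letterInv K X A]) =
      (t.map (letterInv K X)).reverse ++ [letterInv K X A] from rfl, evalWord_append]
    rw [show (t.map (letterInv K X)).reverse = invWord K X t from rfl]
    rw [ih, mul_inv_rev]
    congr 1
    rw [show evalWord K X [letterInv K X A] = evalLetter K X (letterInv K X A) by
      simp [evalWord]]
    exact evalLetter_letterInv K X A

lemma length_invWord (l : List (RelLetter K X)) : (invWord K X l).length = l.length := by
  simp [invWord]

lemma countP_invWord (l : List (RelLetter K X)) :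
    (invWord K X l).countP Sum.isRight = l.countP Sum.isRight := by
  unfold invWord
  rw [List.countP_reverse, List.countP_map]
  congr 1
  funext A
  simp [Function.comp, isRight_letterInv]

lemma exists_word (a : ↥K ∗ FreeGroup ↥X) : ∃ l : List (RelLetter K X), evalWord K X l = a := by
  induction a using Coprod.induction_on with
  | inl k => exact ⟨[Sum.inl k], by simp [evalWord, evalLetter]⟩
  | inr w =>
    induction w using FreeGroup.induction_on with
    | C1 => exact ⟨[], by simp [evalWord_nil]⟩
    | of x =>
      refine ⟨[Sum.inr (x, true)], ?_⟩
      show evalLetter K X (Sum.inr (x, true)) * 1 = _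
      rw [mul_one]; rfl
    | inv_of x _ =>
      refine ⟨[Sum.inr (x, false)], ?_⟩
      show evalLetter K X (Sum.inr (x, false)) * 1 = _
      rw [mul_one]; rfl
    | mul x y hx hy =>
      obtain ⟨lx, hlx⟩ := hx
      obtain ⟨ly, hly⟩ := hy
      exact ⟨lx ++ ly, by rw [evalWord_append, hlx, hly, map_mul]⟩
  | mul x y hx hy =>
    obtain ⟨lx, hlx⟩ := hx
    obtain ⟨ly, hly⟩ := hy
    exact ⟨lx ++ ly, by rw [evalWord_append, hlx, hly]⟩

lemma xLen_le {a : ↥K ∗ FreeGroup ↥X} {l : List (RelLetter K X)} (h : evalWord K X l = a) :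
    xLen K X a ≤ l.countP Sum.isRight := Nat.sInf_le ⟨l, h, rfl⟩

lemma wordLen_le {a : ↥K ∗ FreeGroup ↥X} {l : List (RelLetter K X)} (h : evalWord K X l = a) :
    wordLen K X a ≤ l.length := Nat.sInf_le ⟨l, h, rfl⟩

lemma xLen_exists (a : ↥K ∗ FreeGroup ↥X) :
    ∃ l : List (RelLetter K X), evalWord K X l = a ∧ l.countP Sum.isRight = xLen K X a := by
  have hne : {m | ∃ l : List (RelLetter K X), evalWord K X l = a ∧
      l.countP Sum.isRight = m}.Nonempty := by
    obtain ⟨l, hl⟩ := exists_word K X a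
    exact ⟨l.countP Sum.isRight, l, hl, rfl⟩
  obtain ⟨l, h1, h2⟩ := Nat.sInf_mem hne
  exact ⟨l, h1, h2⟩

/-- No two adjacent `K`-letters. -/
def NK : RelLetter K X → RelLetter K X → Prop :=
  fun A B => ¬(A.isLeft = true ∧ B.isLeft = true)

/-- Prepend a `K`-letter, merging if the word starts with a `K`-letter. -/
def consK (k : ↥K) : List (RelLetter K X) → List (RelLetter K X)
  | Sum.inl k' :: t => Sum.inl (k * k') :: t
  | t => Sum.inl k :: t

/-- Merge adjacent `K`-letters. -/
def clean : List (RelLetter K X) → List (RelLetter K X)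
  | [] => []
  | Sum.inl k :: rest => consK K X k (clean rest)
  | Sum.inr x :: rest => Sum.inr x :: clean rest

lemma consK_eval (k : ↥K) (l : List (RelLetter K X)) :
    evalWord K X (consK K X k l) = evalLetter K X (Sum.inl k) * evalWord K X l := by
  rcases l with _ | ⟨B, t⟩
  · rfl
  · rcases B with k' | x'
    · show evalWord K X (Sum.inl (k * k') :: t) = _
      rw [evalWord_cons, evalWord_cons]
      simp [evalLetter, mul_assoc]
    · rfl

lemma consK_countP (k : ↥K) (l : List (RelLetter K X)) :
    (consK K X k l).countP Sum.isRight = l.countP Sum.isRight := by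
  rcases l with _ | ⟨B, t⟩
  · simp [consK]
  · rcases B with k' | x'
    · show (Sum.inl (k * k') :: t).countP Sum.isRight = _
      simp [List.countP_cons]
    · show (Sum.inl k :: Sum.inr x' :: t).countP Sum.isRight = _
      simp [List.countP_cons]

lemma consK_chain (k : ↥K) (l : List (RelLetter K X)) (h : l.Chain' (NK K X)) :
    (consK K X k l).Chain' (NK K X) := by
  rcases l with _ | ⟨B, t⟩
  · simp [consK]; exact List.isChain_singleton _
  · rcases B with k' | x'
    · show (Sum.inl (k * k') :: t).Chain' (NK K X)
      rcases List.isChain_cons.mp h with ⟨h1, h2⟩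
      exact List.isChain_cons.mpr ⟨h1, h2⟩
    · show (Sum.inl k :: Sum.inr x' :: t).Chain' (NK K X)
      refine List.isChain_cons_cons.mpr ⟨?_, h⟩
      simp [NK]

lemma clean_eval (l : List (RelLetter K X)) : evalWord K X (clean K X l) = evalWord K X l := by
  induction l with
  | nil => rfl
  | cons A t ih =>
    rcases A with k | x
    · show evalWord K X (consK K X k (clean K X t)) = _
      rw [consK_eval, ih, evalWord_cons]
    · show evalWord K X (Sum.inr x :: clean K X t) = _
      rw [evalWord_cons, evalWord_cons, ih]

lemma clean_countP (l : List (RelLetter K X)) :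
    (clean K X l).countP Sum.isRight = l.countP Sum.isRight := by
  induction l with
  | nil => rfl
  | cons A t ih =>
    rcases A with k | x
    · show (consK K X k (clean K X t)).countP Sum.isRight = _
      rw [consK_countP, ih]
      simp [List.countP_cons]
    · show (Sum.inr x :: clean K X t).countP Sum.isRight = _
      simp [List.countP_cons, ih]

lemma clean_chain (l : List (RelLetter K X)) : (clean K X l).Chain' (NK K X) := by
  induction l with
  | nil => exact List.isChain_nil
  | cons A t ih =>
    rcases A with k | x
    · exact consK_chain K X k _ ih
    · show (Sum.inr x :: clean K X t).Chain' (NK K X)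
      refine List.isChain_cons.mpr ⟨?_, ih⟩
      intro y hy
      simp [NK]

lemma chain_len : ∀ l : List (RelLetter K X), l.Chain' (NK K X) →
    l.length ≤ 2 * l.countP Sum.isRight + 1
  | [], _ => by simp
  | [A], _ => by
    have h1 : ([A] : List (RelLetter K X)).length = 1 := rfl
    omega
  | A :: B :: t, h => by
    rcases List.isChain_cons_cons.mp h with ⟨hAB, ht⟩
    rcases A with k | x
    · rcases B with k' | x'
      · exact absurd ⟨rfl, rfl⟩ hAB
      · have ih2 := chain_len t (List.IsChain.tail ht)
        have h1 : (Sum.inl k :: Sum.inr x' :: t : List (RelLetter K X)).length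
            = t.length + 2 := by simp
        have h2 : (Sum.inl k :: Sum.inr x' :: t : List (RelLetter K X)).countP Sum.isRight
            = t.countP Sum.isRight + 1 := by simp [List.countP_cons]
        omega
    · have ih2 := chain_len (B :: t) ht
      have h1 : (Sum.inr x :: B :: t : List (RelLetter K X)).length
          = (B :: t).length + 1 := by simp
      have h2 : (Sum.inr x :: B :: t : List (RelLetter K X)).countP Sum.isRight
          = (B :: t).countP Sum.isRight + 1 := by simp [List.countP_cons]
      omega

lemma exists_clean_word (a : ↥K ∗ FreeGroup ↥X) :
    ∃ l : List (RelLetter K X), evalWord K X l = a ∧ l.countP Sum.isRight = xLen K X a ∧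
      l.Chain' (NK K X) ∧ l.length ≤ 2 * xLen K X a + 1 := by
  obtain ⟨l₀, h1, h2⟩ := xLen_exists K X a
  refine ⟨clean K X l₀, by rw [clean_eval, h1], by rw [clean_countP, h2], clean_chain K X l₀, ?_⟩
  have := chain_len K X (clean K X l₀) (clean_chain K X l₀)
  rw [clean_countP, h2] at this
  exact this

lemma wordLen_le_two_xLen (a : ↥K ∗ FreeGroup ↥X) : wordLen K X a ≤ 2 * xLen K X a + 1 := by
  obtain ⟨l, h1, _, _, h4⟩ := exists_clean_word K X a
  exact le_trans (wordLen_le K X h1) h4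

/-- Convert a `G`-word over `K ∪ X` into a word over the relative alphabet. -/
lemma exists_relword_of_gword (l : List G) (hl : ∀ y ∈ l, y ∈ (K : Set G) ∪ X) :
    ∃ t : List (RelLetter K X), theta K X (evalWord K X t) = l.prod ∧
      t.length = l.length ∧ t.countP Sum.isRight ≤ l.length := by
  induction l with
  | nil => exact ⟨[], by simp [evalWord_nil], rfl, by simp⟩
  | cons y t ih =>
    obtain ⟨tw, h1, h2, h3⟩ := ih (fun z hz => hl z (List.mem_cons_of_mem _ hz))
    have hy := hl y List.mem_cons_self
    by_cases hK : y ∈ (K : Set G)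
    · refine ⟨Sum.inl ⟨y, hK⟩ :: tw, ?_, by simp [h2], ?_⟩
      · rw [evalWord_cons, map_mul, theta_evalLetter_inl, h1, List.prod_cons]
      · have hc : (Sum.inl ⟨y, hK⟩ :: tw : List (RelLetter K X)).countP Sum.isRight
            = tw.countP Sum.isRight := by simp [List.countP_cons]
        rw [hc]
        simp only [List.length_cons]
        omega
    · have hX : y ∈ X := by rcases hy with h | h; exact absurd h hK; exact h
      refine ⟨Sum.inr (⟨y, hX⟩, true) :: tw, ?_, by simp [h2], ?_⟩
      · rw [evalWord_cons, map_mul, theta_evalLetter_inr_t, h1, List.prod_cons]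
      · have hc : (Sum.inr (⟨y, hX⟩, true) :: tw : List (RelLetter K X)).countP Sum.isRight
            = tw.countP Sum.isRight + 1 := by simp [List.countP_cons]
        rw [hc]
        simp only [List.length_cons]
        omega

lemma theta_letter_mem (hX : ∀ x ∈ X, x⁻¹ ∈ X) (A : RelLetter K X) :
    theta K X (evalLetter K X A) ∈ (K : Set G) ∪ X := by
  rcases A with k | ⟨x, b⟩
  · rw [theta_evalLetter_inl]; exact Or.inl k.2
  · cases b
    · rw [theta_evalLetter_inr_f]; exact Or.inr (hX x x.2)
    · rw [theta_evalLetter_inr_t]; exact Or.inr x.2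

lemma theta_evalWord_prod (l : List (RelLetter K X)) :
    (l.map fun A => theta K X (evalLetter K X A)).prod = theta K X (evalWord K X l) := by
  induction l with
  | nil => simp [evalWord_nil]
  | cons A t ih => rw [List.map_cons, List.prod_cons, evalWord_cons, map_mul, ih]



section Phi

variable {G : Type*} [Group G] (K : Subgroup G) (X : Set G)

lemma wordLen_exists (a : ↥K ∗ FreeGroup ↥X) :
    ∃ l : List (RelLetter K X), evalWord K X l = a ∧ l.length = wordLen K X a := by
  have hne : {n | ∃ l : List (RelLetter K X), evalWord K X l = a ∧ l.length = n}.Nonempty := by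
    obtain ⟨l, hl⟩ := exists_word K X a
    exact ⟨l.length, l, hl, rfl⟩
  obtain ⟨l, h1, h2⟩ := Nat.sInf_mem hne
  exact ⟨l, h1, h2⟩

lemma wordLen_mul_le (a b : ↥K ∗ FreeGroup ↥X) :
    wordLen K X (a * b) ≤ wordLen K X a + wordLen K X b := by
  obtain ⟨la, ha1, ha2⟩ := wordLen_exists K X a
  obtain ⟨lb, hb1, hb2⟩ := wordLen_exists K X b
  have := wordLen_le K X (l := la ++ lb) (a := a * b) (by rw [evalWord_append, ha1, hb1])
  simpa [ha2, hb2] using this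

lemma wordLen_inv_le (a : ↥K ∗ FreeGroup ↥X) : wordLen K X a⁻¹ ≤ wordLen K X a := by
  obtain ⟨la, ha1, ha2⟩ := wordLen_exists K X a
  have := wordLen_le K X (l := invWord K X la) (a := a⁻¹) (by rw [evalWord_invWord, ha1])
  simpa [length_invWord, ha2] using this

lemma xLen_mul_le (a b : ↥K ∗ FreeGroup ↥X) :
    xLen K X (a * b) ≤ xLen K X a + xLen K X b := by
  obtain ⟨la, ha1, ha2⟩ := xLen_exists K X a
  obtain ⟨lb, hb1, hb2⟩ := xLen_exists K X b
  have := xLen_le K X (l := la ++ lb) (a := a * b) (by rw [evalWord_append, ha1, hb1])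
  simpa [List.countP_append, ha2, hb2] using this

variable (φ : ↥K → ℝ) (C₀ C : ℝ)

lemma phi_one (hanti : IsAntisym φ) : φ 1 = 0 := by
  have := hanti 1
  simp only [inv_one] at this
  linarith

/-- Uniform lower bound on `φ̃_C` over a fiber of `θ`. -/
lemma phitC_lower (hqm : IsQM φ) (hctl : LinearlyControlled K X φ C₀)
    (hC2 : 2 * C₀ ≤ C) {g : G} {a₀ : ↥K ∗ FreeGroup ↥X} (ha₀ : theta K X a₀ = g) :
    ∀ a, theta K X a = g →
      φ (eta K X a₀) - qmDefect φ - C₀ * ((wordLen K X a₀ : ℝ) + 2) ≤ phitC K X φ C a := by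
  intro a ha
  have hker : a * a₀⁻¹ ∈ (theta K X).ker := by
    rw [MonoidHom.mem_ker, map_mul, map_inv, ha, ha₀]
    simp
  have hwl : wordLen K X (a * a₀⁻¹) ≤ 2 * xLen K X a + 1 + wordLen K X a₀ := by
    calc wordLen K X (a * a₀⁻¹) ≤ wordLen K X a + wordLen K X a₀⁻¹ := wordLen_mul_le K X _ _
    _ ≤ (2 * xLen K X a + 1) + wordLen K X a₀ := by
        have h1 := wordLen_le_two_xLen K X a
        have h2 := wordLen_inv_le K X a₀
        omega
  have hcb := hctl (2 * xLen K X a + 1 + wordLen K X a₀) _ hker hwl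
  have heq : eta K X a = eta K X (a * a₀⁻¹) * eta K X a₀ := by
    rw [← map_mul]
    congr 1
    group
  have hd := abs_le.mp (defect_bound hqm (eta K X (a * a₀⁻¹)) (eta K X a₀))
  rw [← heq] at hd
  have hcb' := (abs_le.mp hcb).1
  unfold phitC
  have hxc : 0 ≤ (C - 2 * C₀) * (xLen K X a : ℝ) :=
    mul_nonneg (by linarith) (by positivity)
  push_cast at hcb' ⊢
  nlinarith [hd.1, hd.2]

lemma PhiSet_nonempty (hsurj : Function.Surjective (theta K X)) (g : G) :
    {r : ℝ | ∃ a : ↥K ∗ FreeGroup ↥X, theta K X a = g ∧ r = phitC K X φ C a}.Nonempty := by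
  obtain ⟨a, ha⟩ := hsurj g
  exact ⟨phitC K X φ C a, a, ha, rfl⟩

lemma PhiSet_bdd (hqm : IsQM φ) (hctl : LinearlyControlled K X φ C₀) (hC2 : 2 * C₀ ≤ C)
    (hsurj : Function.Surjective (theta K X)) (g : G) :
    BddBelow {r : ℝ | ∃ a : ↥K ∗ FreeGroup ↥X, theta K X a = g ∧ r = phitC K X φ C a} := by
  obtain ⟨a₀, ha₀⟩ := hsurj g
  refine ⟨φ (eta K X a₀) - qmDefect φ - C₀ * ((wordLen K X a₀ : ℝ) + 2), ?_⟩
  rintro r ⟨a, ha, rfl⟩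
  exact phitC_lower K X φ C₀ C hqm hctl hC2 ha₀ a ha

lemma PhiC_le_phitC (hqm : IsQM φ) (hctl : LinearlyControlled K X φ C₀) (hC2 : 2 * C₀ ≤ C)
    (hsurj : Function.Surjective (theta K X)) {g : G} {a : ↥K ∗ FreeGroup ↥X}
    (ha : theta K X a = g) : PhiC K X φ C g ≤ phitC K X φ C a :=
  csInf_le (PhiSet_bdd K X φ C₀ C hqm hctl hC2 hsurj g) ⟨a, ha, rfl⟩

lemma le_PhiC (hsurj : Function.Surjective (theta K X)) {g : G} {B : ℝ}
    (hB : ∀ a : ↥K ∗ FreeGroup ↥X, theta K X a = g → B ≤ phitC K X φ C a) :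
    B ≤ PhiC K X φ C g := by
  refine le_csInf (PhiSet_nonempty K X φ C hsurj g) ?_
  rintro r ⟨a, ha, rfl⟩
  exact hB a ha

lemma exists_near_opt (hsurj : Function.Surjective (theta K X)) (hCpos : 0 < C) (g : G) :
    ∃ a : ↥K ∗ FreeGroup ↥X, theta K X a = g ∧ phitC K X φ C a < PhiC K X φ C g + C := by
  obtain ⟨r, ⟨a, ha, rfl⟩, hlt⟩ :=
    Real.lt_sInf_add_pos (PhiSet_nonempty K X φ C hsurj g) hCpos
  exact ⟨a, ha, hlt⟩

/-- The easy direction: subadditivity of `Φ_C` up to `D`. -/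
lemma PhiC_subadd (hqm : IsQM φ) (hctl : LinearlyControlled K X φ C₀) (hC2 : 2 * C₀ ≤ C)
    (hCpos : 0 < C) (hsurj : Function.Surjective (theta K X)) (g h : G) :
    PhiC K X φ C (g * h) ≤ PhiC K X φ C g + PhiC K X φ C h + qmDefect φ := by
  have key : ∀ a : ↥K ∗ FreeGroup ↥X, theta K X a = g →
      ∀ b : ↥K ∗ FreeGroup ↥X, theta K X b = h →
      PhiC K X φ C (g * h) ≤ phitC K X φ C a + phitC K X φ C b + qmDefect φ := by
    intro a ha b hb
    have hab : theta K X (a * b) = g * h := by rw [map_mul, ha, hb]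
    have h1 : PhiC K X φ C (g * h) ≤ phitC K X φ C (a * b) :=
      PhiC_le_phitC K X φ C₀ C hqm hctl hC2 hsurj hab
    have h2 : phitC K X φ C (a * b) ≤ phitC K X φ C a + phitC K X φ C b + qmDefect φ := by
      unfold phitC
      have hd := (abs_le.mp (defect_bound hqm (eta K X a) (eta K X b))).1
      rw [← map_mul] at hd
      have hx : (xLen K X (a * b) : ℝ) ≤ (xLen K X a : ℝ) + (xLen K X b : ℝ) := by
        exact_mod_cast xLen_mul_le K X a b
      nlinarith [mul_le_mul_of_nonneg_left hx (le_of_lt hCpos)]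
    linarith
  have step1 : ∀ b : ↥K ∗ FreeGroup ↥X, theta K X b = h →
      PhiC K X φ C (g * h) - phitC K X φ C b - qmDefect φ ≤ PhiC K X φ C g := by
    intro b hb
    refine le_PhiC K X φ C hsurj (fun a ha => ?_)
    linarith [key a ha b hb]
  have step2 : PhiC K X φ C (g * h) - PhiC K X φ C g - qmDefect φ ≤ PhiC K X φ C h := by
    refine le_PhiC K X φ C hsurj (fun b hb => ?_)
    linarith [step1 b hb]
  linarith

/-- Near-optimal clean words are quasigeodesic: the tightness lemma. -/
lemma tight_window (hqm : IsQM φ) (hanti : IsAntisym φ) (hctl : LinearlyControlled K X φ C₀)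
    (hC0pos : 0 < C₀) (hC : 20 * C₀ + 11 * qmDefect φ ≤ C)
    (hsurj : Function.Surjective (theta K X))
    (hgen : Gen ((K : Set G) ∪ X))
    {gh : G} {a : ↥K ∗ FreeGroup ↥X} (ha : theta K X a = gh)
    (hopt : phitC K X φ C a < PhiC K X φ C gh + C)
    {l : List (RelLetter K X)} (hl : evalWord K X l = a)
    (hcount : l.countP Sum.isRight = xLen K X a) (hchain : l.Chain' (NK K X)) :
    ∀ i j : ℕ, i ≤ j → j ≤ l.length →
      (j : ℝ) - (i : ℝ) ≤
        4 * wordDist ((K : Set G) ∪ X) (theta K X (evalWord K X (l.take i)))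
          (theta K X (evalWord K X (l.take j))) + 5 := by
  have hD0 : 0 ≤ qmDefect φ := defect_nonneg hqm
  have hCpos : 0 < C := by linarith
  have hC20 : C₀ ≤ C / 20 := by linarith
  have hD11 : qmDefect φ ≤ C / 11 := by linarith
  intro i j hij hjl
  set D := qmDefect φ with hDdef
  set S : Set G := (K : Set G) ∪ X with hSdef
  set pi := theta K X (evalWord K X (l.take i)) with hpi
  set pj := theta K X (evalWord K X (l.take j)) with hpj
  -- decompose l
  set mid := (l.take j).drop i with hmid
  have hdec1 : l.take i ++ mid = l.take j := by
    have h0 := List.take_append_drop i (l.take j)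
    rw [List.take_take, min_eq_left hij] at h0
    rw [hmid]
    exact h0
  have hdec2 : (l.take i ++ mid) ++ l.drop j = l := by
    rw [hdec1, List.take_append_drop]
  have hmidlen : mid.length = j - i := by
    rw [hmid, List.length_drop, List.length_take, min_eq_left hjl]
  set Pre := evalWord K X (l.take i) with hPre
  set A' := evalWord K X mid with hA'
  set Suf := evalWord K X (l.drop j) with hSuf
  have hPA : Pre * A' = evalWord K X (l.take j) := by
    rw [hPre, hA', ← evalWord_append, hdec1]
  have hPAS : Pre * A' * Suf = a := by
    rw [hPA, hSuf, ← evalWord_append, List.take_append_drop, hl]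
  -- the shortcut
  set q := pi⁻¹ * pj with hq
  have hθA' : theta K X A' = q := by
    have h0 : theta K X Pre * theta K X A' = pj := by rw [← map_mul, hPA, hpj]
    rw [hq, hpi]
    rw [← h0]
    group
  obtain ⟨lq, hlq1, hlq2, hlq3⟩ := exists_geo S hgen q
  obtain ⟨tw, htw1, htw2, htw3⟩ := exists_relword_of_gword K X lq hlq1
  set W := evalWord K X tw with hW
  have hθW : theta K X W = q := by rw [hW, htw1, hlq2]
  set d := wordLenOn S q with hd
  have hlqd : lq.length = d := hlq3
  -- the competitor
  set a'' := Pre * W * Suf with ha''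
  have hθa'' : theta K X a'' = gh := by
    have h1 : theta K X (Pre * A' * Suf) = gh := by rw [hPAS, ha]
    rw [map_mul, map_mul, hθA'] at h1
    rw [ha'', map_mul, map_mul, hθW]
    exact h1
  have hC2 : 2 * C₀ ≤ C := by linarith
  have hPhile : PhiC K X φ C gh ≤ phitC K X φ C a'' :=
    PhiC_le_phitC K X φ C₀ C hqm hctl hC2 hsurj hθa''
  -- xLen of the competitor
  set xm := mid.countP Sum.isRight with hxm
  have hcount2 : (l.take i).countP Sum.isRight + xm + (l.drop j).countP Sum.isRight
      = xLen K X a := by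
    have h0 : l.countP Sum.isRight = ((l.take i ++ mid) ++ l.drop j).countP Sum.isRight := by
      rw [hdec2]
    rw [List.countP_append, List.countP_append] at h0
    rw [← hcount, h0, hxm]
  have hxa'' : (xLen K X a'' : ℝ) ≤ (xLen K X a : ℝ) - xm + d := by
    have h1 : xLen K X a'' ≤ (l.take i ++ tw ++ l.drop j).countP Sum.isRight := by
      refine xLen_le K X ?_
      rw [evalWord_append, evalWord_append, ha'', hPre, hW, hSuf]
    rw [List.countP_append, List.countP_append] at h1
    have h2 : tw.countP Sum.isRight ≤ d := by rw [← hlqd]; exact htw3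
    have h3 : xLen K X a'' + xm ≤ xLen K X a + d := by omega
    have h4 := (Nat.cast_le (α := ℝ)).mpr h3
    push_cast at h4
    linarith
  -- control on the kernel element
  have hker : A' * W⁻¹ ∈ (theta K X).ker := by
    rw [MonoidHom.mem_ker, map_mul, map_inv, hθA', hθW]
    simp
  have hwlk : wordLen K X (A' * W⁻¹) ≤ (j - i) + d := by
    have h1 : evalWord K X (mid ++ invWord K X tw) = A' * W⁻¹ := by
      rw [evalWord_append, evalWord_invWord, hA', hW]
    have h2 := wordLen_le K X h1
    rw [List.length_append, length_invWord, hmidlen, htw2, hlqd] at h2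
    exact h2
  have hcb : |φ (eta K X (A' * W⁻¹))| ≤ C₀ * (((j - i) + d : ℕ) : ℝ) + C₀ :=
    hctl ((j - i) + d) _ hker hwlk
  -- quasimorphism estimates
  set u := eta K X Pre with hu
  set α := eta K X A' with hα
  set β := eta K X W with hβ
  set v := eta K X Suf with hv
  have hηa : eta K X a = u * α * v := by rw [← hPAS, map_mul, map_mul]
  have hηa'' : eta K X a'' = u * β * v := by rw [ha'', map_mul, map_mul]
  clear_value D S pi pj mid Pre A' Suf q W d a'' xm u α β v
  have hd1 := abs_le.mp (defect_bound hqm β v)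
  have hd2 := abs_le.mp (defect_bound hqm u (β * v))
  have hd3 := abs_le.mp (defect_bound hqm α v)
  have hd4 := abs_le.mp (defect_bound hqm u (α * v))
  have hd5 := abs_le.mp (defect_bound hqm α β⁻¹)
  have hkerval : eta K X (A' * W⁻¹) = α * β⁻¹ := by rw [map_mul, map_inv, hα, hβ]
  have hcb' := abs_le.mp hcb
  rw [hkerval] at hcb'
  have hantiβ : φ β⁻¹ = - φ β := hanti β
  -- chain bound : mid is an infix
  have hinfix : mid <:+: l := ⟨l.take i, l.drop j, hdec2⟩
  have hchainmid := hchain.infix hinfix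
  have hlen := chain_len K X mid hchainmid
  rw [hmidlen, ← hxm] at hlen
  have hji : ((j : ℝ) - i) ≤ 2 * (xm : ℝ) + 1 := by
    have h5 : ((j - i : ℕ) : ℝ) ≤ 2 * (xm : ℝ) + 1 := by exact_mod_cast hlen
    rw [Nat.cast_sub hij] at h5
    linarith
  -- combine into the main inequality
  have hmain : C * (xm : ℝ) ≤ C * d + C₀ * ((j : ℝ) - i + d) + C₀ + 5 * D + C := by
    have e1 : φ (eta K X a'') ≤ φ u + φ β + φ v + 2 * D := by
      rw [hηa'', mul_assoc]
      linarith [hd1.1, hd1.2, hd2.1, hd2.2]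
    have e2 : φ u + φ α + φ v - 2 * D ≤ φ (eta K X a) := by
      rw [hηa, mul_assoc]
      linarith [hd3.1, hd3.2, hd4.1, hd4.2]
    have e3 : φ β - φ α ≤ D - φ (α * β⁻¹) := by linarith [hd5.1, hd5.2, hantiβ]
    have e4 : - φ (α * β⁻¹) ≤ C₀ * ((j : ℝ) - i + d) + C₀ := by
      have hcast : ((j - i + d : ℕ) : ℝ) = (j : ℝ) - i + d := by
        push_cast [Nat.cast_sub hij]
        ring
      rw [hcast] at hcb'
      linarith [hcb'.1, neg_abs_le (φ (α * β⁻¹))]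
    have e5 : phitC K X φ C a < phitC K X φ C a'' + C := lt_of_lt_of_le hopt (by linarith)
    unfold phitC at e5
    have e6 : C * (xLen K X a'' : ℝ) ≤ C * (xLen K X a : ℝ) - C * (xm : ℝ) + C * (d : ℝ) := by
      have h7 := mul_le_mul_of_nonneg_left hxa'' (le_of_lt hCpos)
      linarith [h7]
    linarith [e1, e2, e3, e4, e5, e6]
  -- final arithmetic
  have hCd : 0 ≤ C * (d : ℝ) := mul_nonneg (le_of_lt hCpos) (Nat.cast_nonneg d)
  have hxmd : (xm : ℝ) ≤ 2 * (d : ℝ) + 2 := by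
    by_contra hcon
    push_neg at hcon
    have h1 : C₀ * ((j : ℝ) - i + d) ≤ (C / 20) * (2 * (xm : ℝ) + 1 + (d : ℝ)) := by
      calc C₀ * ((j : ℝ) - i + d) ≤ C₀ * (2 * (xm : ℝ) + 1 + (d : ℝ)) := by
            apply mul_le_mul_of_nonneg_left (by linarith [hji]) (le_of_lt hC0pos)
        _ ≤ (C / 20) * (2 * (xm : ℝ) + 1 + (d : ℝ)) := by
            apply mul_le_mul_of_nonneg_right hC20 (by positivity)
    have h3 : C * (2 * (d : ℝ) + 2) < C * xm := mul_lt_mul_of_pos_left hcon hCpos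
    linarith [hmain, h1, h3, hD11, hC20, hCd, hCpos]
  have hwd : wordDist S pi pj = (d : ℝ) := by
    rw [wordDist, hd, hq]
  rw [hwd]
  linarith [hji, hxmd]

end Phi


section Morse

variable {G : Type*} [Group G]

lemma nat_le_3sqrt (k : ℕ) (y : ℝ) (hy : 1 ≤ y) (h : (2:ℝ)^k ≤ y) :
    (k : ℝ) ≤ 3 * Real.sqrt y := by
  have hlog2 : (0.6931 : ℝ) < Real.log 2 := by
    have := Real.log_two_gt_d9; linarith
  have h1 : (k : ℝ) * Real.log 2 ≤ Real.log y := by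
    rw [← Real.log_pow]
    exact Real.log_le_log (by positivity) h
  have h2 : Real.log y ≤ 2 * Real.sqrt y - 2 := by
    have hsq : Real.log (Real.sqrt y) ≤ Real.sqrt y - 1 :=
      Real.log_le_sub_one_of_pos (Real.sqrt_pos.mpr (by linarith))
    rw [Real.log_sqrt (by linarith)] at hsq
    linarith
  have h3 : 1 ≤ Real.sqrt y := by
    rw [show (1:ℝ) = Real.sqrt 1 by simp]
    exact Real.sqrt_le_sqrt hy
  nlinarith [Real.sqrt_nonneg y, mul_le_mul_of_nonneg_left hlog2.le (Nat.cast_nonneg (α := ℝ) k)]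

lemma wd_mul_left (S : Set G) (g x y : G) : wordDist S (g * x) (g * y) = wordDist S x y := by
  unfold wordDist
  congr 2
  group

/-- A "cap" path realizing the distance between two points. -/
lemma cap_path (S : Set G) (hgen : Gen S) (x y : G) :
    ∃ cp : ℕ → G, ∃ dL : ℕ, cp 0 = x ∧ cp dL = y ∧ (dL : ℝ) = wordDist S x y ∧
      (∀ i, i < dL → wordDist S (cp i) (cp (i+1)) ≤ 1) ∧
      (∀ i, i ≤ dL → wordDist S x (cp i) ≤ (i : ℝ)) := by
  obtain ⟨l, hl1, hl2, hl3⟩ := exists_geo S hgen (x⁻¹ * y)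
  refine ⟨fun i => x * (l.take i).prod, l.length, by simp, ?_, ?_, ?_, ?_⟩
  · show x * (l.take l.length).prod = y
    rw [List.take_length, hl2]
    group
  · rw [wordDist]
    exact_mod_cast congrArg Nat.cast hl3
  · intro i hi
    rw [wd_mul_left S x]
    have htake : l.take (i+1) = l.take i ++ [l[i]] := (List.take_concat_get' l i hi).symm
    rw [wordDist, htake, List.prod_append, List.prod_singleton]
    have harg : ((l.take i).prod)⁻¹ * ((l.take i).prod * l[i]) = l[i] := by
      group
    rw [harg]
    have hmem : l[i] ∈ S := hl1 _ (List.getElem_mem hi)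
    have hle := wordLenOn_le S (q := l[i]) (l := [l[i]]) (by simpa using hmem) (by simp)
    simp only [List.length_singleton] at hle
    exact_mod_cast hle
  · intro i hi
    have harg : x⁻¹ * (x * (l.take i).prod) = (l.take i).prod := by group
    rw [wordDist, harg]
    have hle := wordLenOn_le S (l := l.take i)
      (fun y hy => hl1 y (List.take_subset i l hy)) rfl
    have hle2 : wordLenOn S (l.take i).prod ≤ i := by
      refine le_trans hle ?_
      rw [List.length_take]
      omega
    exact_mod_cast hle2

/-- Concatenation of two functional paths. -/
lemma path_concat (S : Set G) (q₁ q₂ : ℕ → G) (L₁ L₂ : ℕ)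
    (h1 : ∀ i, i < L₁ → wordDist S (q₁ i) (q₁ (i+1)) ≤ 1)
    (h2 : ∀ i, i < L₂ → wordDist S (q₂ i) (q₂ (i+1)) ≤ 1)
    (hend : q₁ L₁ = q₂ 0) :
    ∃ q : ℕ → G, q 0 = q₁ 0 ∧ q (L₁ + L₂) = q₂ L₂ ∧
      (∀ i, i < L₁ + L₂ → wordDist S (q i) (q (i+1)) ≤ 1) ∧
      (∀ i, i ≤ L₁ + L₂ → (∃ i₁, i₁ ≤ L₁ ∧ q i = q₁ i₁) ∨ (∃ i₂, i₂ ≤ L₂ ∧ q i = q₂ i₂)) := by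
  refine ⟨fun i => if i ≤ L₁ then q₁ i else q₂ (i - L₁), by simp, ?_, ?_, ?_⟩
  · by_cases hL : L₁ + L₂ ≤ L₁
    · have hL2 : L₂ = 0 := by omega
      simp only [if_pos hL]
      rw [show L₁ + L₂ = L₁ by omega, hend, hL2]
    · simp only [if_neg hL]
      congr 1
      omega
  · intro i hi
    by_cases ha : i + 1 ≤ L₁
    · simp only [if_pos (by omega : i ≤ L₁), if_pos ha]
      exact h1 i (by omega)
    · by_cases hb : i ≤ L₁
      · have hiL : i = L₁ := by omega
        simp only [if_pos hb, if_neg ha]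
        rw [hiL, hend]
        have he1 : L₁ + 1 - L₁ = 1 := by omega
        rw [he1]
        exact h2 0 (by omega)
      · simp only [if_neg hb, if_neg ha]
        have he2 : i + 1 - L₁ = (i - L₁) + 1 := by omega
        rw [he2]
        exact h2 (i - L₁) (by omega)
  · intro i hi
    by_cases hb : i ≤ L₁
    · exact Or.inl ⟨i, hb, by simp [if_pos hb]⟩
    · exact Or.inr ⟨i - L₁, by omega, by simp [if_neg hb]⟩

/-- A subsegment of a path between two of its points, in either direction. -/
lemma path_seg (S : Set G) (hS : Symm S) (hgen : Gen S) (p : ℕ → G) (Lp : ℕ)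
    (hp : ∀ i, i < Lp → wordDist S (p i) (p (i+1)) ≤ 1) (j₁ j₂ : ℕ)
    (hj1 : j₁ ≤ Lp) (hj2 : j₂ ≤ Lp) :
    ∃ sg : ℕ → G, ∃ Lsg : ℕ, sg 0 = p j₁ ∧ sg Lsg = p j₂ ∧
      (∀ i, i < Lsg → wordDist S (sg i) (sg (i+1)) ≤ 1) ∧
      (∀ i, i ≤ Lsg → ∃ jj, jj ≤ Lp ∧ sg i = p jj) ∧
      Lsg = max j₁ j₂ - min j₁ j₂ := by
  rcases le_total j₁ j₂ with hle | hle
  · refine ⟨fun i => p (j₁ + i), j₂ - j₁, by simp,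
      by show p (j₁ + (j₂ - j₁)) = p j₂; congr 1; omega, ?_, ?_,
      by rw [max_eq_right hle, min_eq_left hle]⟩
    · intro i hi
      have hlt : j₁ + i < Lp := by omega
      have he : j₁ + (i+1) = (j₁ + i) + 1 := by omega
      show wordDist S (p (j₁ + i)) (p (j₁ + (i+1))) ≤ 1
      rw [he]
      exact hp _ hlt
    · intro i hi
      exact ⟨j₁ + i, by omega, rfl⟩
  · refine ⟨fun i => p (j₁ - i), j₁ - j₂, by simp,
      by show p (j₁ - (j₁ - j₂)) = p j₂; congr 1; omega, ?_, ?_,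
      by rw [max_eq_left hle, min_eq_right hle]⟩
    · intro i hi
      have he : j₁ - i = (j₁ - (i+1)) + 1 := by omega
      have hlt : j₁ - (i+1) < Lp := by omega
      show wordDist S (p (j₁ - i)) (p (j₁ - (i+1))) ≤ 1
      rw [wd_symm S hS hgen, he]
      exact hp _ hlt
    · intro i hi
      exact ⟨j₁ - i, by omega, rfl⟩

set_option maxHeartbeats 2000000 in
/-- The Morse-type bootstrap: every point of a geodesic chain is uniformly close to a
tight (quasigeodesic) path with the same endpoints. -/
lemma bootstrap (S : Set G) (hS : Symm S) (hgen : Gen S) {δ : ℝ} (hδ : 0 ≤ δ)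
    (hyp : HypWith S δ) (Lc Lp : ℕ) (c p : ℕ → G)
    (hc : ∀ s t : ℕ, s ≤ t → t ≤ Lc → wordDist S (c s) (c t) = (t : ℝ) - s)
    (hp : ∀ i, i < Lp → wordDist S (p i) (p (i+1)) ≤ 1)
    (hqg : ∀ i j : ℕ, i ≤ j → j ≤ Lp → (j : ℝ) - i ≤ 4 * wordDist S (p i) (p j) + 5)
    (h0 : c 0 = p 0) (h1 : c Lc = p Lp) :
    ∀ t, t ≤ Lc → ∃ jj, jj ≤ Lp ∧
      wordDist S (c t) (p jj) ≤ (22 * δ + 22)^2 + 100 := by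
  have hmin : ∀ s : ℕ, ∃ j, j ≤ Lp ∧ ∀ j', j' ≤ Lp →
      wordDist S (c s) (p j) ≤ wordDist S (c s) (p j') := by
    intro s
    obtain ⟨j, hjmem, hjmin⟩ := Finset.exists_min_image (Finset.range (Lp+1))
      (fun j => wordDist S (c s) (p j)) ⟨0, Finset.mem_range.mpr (by omega)⟩
    exact ⟨j, by have := Finset.mem_range.mp hjmem; omega,
      fun j' hj' => hjmin j' (Finset.mem_range.mpr (by omega))⟩
  choose jm hjm1 hjm2 using hmin
  obtain ⟨t0, ht0mem, ht0max⟩ := Finset.exists_max_image (Finset.range (Lc+1))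
    (fun s => wordDist S (c s) (p (jm s))) ⟨0, Finset.mem_range.mpr (by omega)⟩
  have ht0Lc : t0 ≤ Lc := by have := Finset.mem_range.mp ht0mem; omega
  set R := wordDist S (c t0) (p (jm t0)) with hRdef
  have hmaxR : ∀ s, s ≤ Lc → wordDist S (c s) (p (jm s)) ≤ R := by
    intro s hs
    exact ht0max s (Finset.mem_range.mpr (by omega))
  intro t ht
  refine ⟨jm t, hjm1 t, le_trans (hmaxR t ht) ?_⟩
  by_contra hcon
  push_neg at hcon
  have hR0 : 0 ≤ R := wd_nonneg S _ _
  have hRbig : 100 ≤ R := by nlinarith [sq_nonneg (22*δ + 22)]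
  have hfar : ∀ j, j ≤ Lp → R ≤ wordDist S (c t0) (p j) := fun j hj => hjm2 t0 j hj
  set k := ⌈(2*R)⌉₊ with hkdef
  have hk1 : 2*R ≤ (k:ℝ) := Nat.le_ceil _
  have hk2 : (k:ℝ) ≤ 2*R + 1 := le_of_lt (Nat.ceil_lt_add_one (by positivity))
  set sm := t0 - k with hsmdef
  set sp := min (t0 + k) Lc with hspdef
  have hsmt : sm ≤ t0 := by omega
  have htsp : t0 ≤ sp := by omega
  have hspLc : sp ≤ Lc := by omega
  have hdzm : wordDist S (c t0) (c sm) = (t0:ℝ) - sm := by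
    rw [wd_symm S hS hgen]
    exact hc sm t0 hsmt ht0Lc
  have hdzp : wordDist S (c t0) (c sp) = (sp:ℝ) - t0 := hc t0 sp htsp hspLc
  have hdmp : wordDist S (c sm) (c sp) = (sp:ℝ) - sm := hc sm sp (by omega) hspLc
  -- left cap
  have hleft : ∃ jL, jL ≤ Lp ∧ ∃ cpL : ℕ → G, ∃ dL : ℕ,
      cpL 0 = c sm ∧ cpL dL = p jL ∧ (dL : ℝ) ≤ R ∧
      wordDist S (c sm) (p jL) ≤ R ∧
      (∀ i, i < dL → wordDist S (cpL i) (cpL (i+1)) ≤ 1) ∧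
      (∀ i, i ≤ dL → R ≤ wordDist S (c t0) (cpL i)) := by
    by_cases hcl : k ≤ t0
    · obtain ⟨cp, dL, hcp0, hcp1, hcpd, hcps, hcpnear⟩ := cap_path S hgen (c sm) (p (jm sm))
      have hdLR : (dL : ℝ) ≤ R := by
        rw [hcpd]
        exact hmaxR sm (by omega)
      refine ⟨jm sm, hjm1 sm, cp, dL, hcp0, hcp1, hdLR, hmaxR sm (by omega), hcps, ?_⟩
      intro i hi
      have htri := wd_triangle S hgen (c t0) (cp i) (c sm)
      have hsymm : wordDist S (cp i) (c sm) = wordDist S (c sm) (cp i) :=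
        wd_symm S hS hgen _ _
      have hnear := hcpnear i hi
      have hsmval : (t0 : ℝ) - sm = (k : ℝ) := by
        have hv : sm + k = t0 := by omega
        have hv2 := congrArg (Nat.cast (R := ℝ)) hv
        push_cast at hv2
        linarith
      rw [hdzm, hsmval] at htri
      have hiR : (i : ℝ) ≤ R := le_trans (by exact_mod_cast hi) hdLR
      linarith [htri, hsymm ▸ hnear]
    · have hsm0 : sm = 0 := by omega
      refine ⟨0, by omega, fun _ => p 0, 0, by rw [hsm0, h0], rfl, by simpa using hR0,
        ?_, ?_, ?_⟩
      · rw [hsm0, h0, wd_self]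
        exact hR0
      · intro i hi
        omega
      · intro i hi
        exact hfar 0 (by omega)
  -- right cap
  have hright : ∃ jR, jR ≤ Lp ∧ ∃ cpR : ℕ → G, ∃ dR : ℕ,
      cpR 0 = c sp ∧ cpR dR = p jR ∧ (dR : ℝ) ≤ R ∧
      wordDist S (c sp) (p jR) ≤ R ∧
      (∀ i, i < dR → wordDist S (cpR i) (cpR (i+1)) ≤ 1) ∧
      (∀ i, i ≤ dR → R ≤ wordDist S (c t0) (cpR i)) := by
    by_cases hcl : t0 + k ≤ Lc
    · obtain ⟨cp, dR, hcp0, hcp1, hcpd, hcps, hcpnear⟩ := cap_path S hgen (c sp) (p (jm sp))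
      have hdRR : (dR : ℝ) ≤ R := by
        rw [hcpd]
        exact hmaxR sp (by omega)
      refine ⟨jm sp, hjm1 sp, cp, dR, hcp0, hcp1, hdRR, hmaxR sp (by omega), hcps, ?_⟩
      intro i hi
      have htri := wd_triangle S hgen (c t0) (cp i) (c sp)
      have hsymm : wordDist S (cp i) (c sp) = wordDist S (c sp) (cp i) :=
        wd_symm S hS hgen _ _
      have hnear := hcpnear i hi
      have hspval : (sp : ℝ) - t0 = (k : ℝ) := by
        have hv : sp = t0 + k := by omega
        have hv2 := congrArg (Nat.cast (R := ℝ)) hv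
        push_cast at hv2
        linarith
      rw [hdzp, hspval] at htri
      have hiR : (i : ℝ) ≤ R := le_trans (by exact_mod_cast hi) hdRR
      linarith [htri, hsymm ▸ hnear]
    · have hsp0 : sp = Lc := by omega
      refine ⟨Lp, le_refl _, fun _ => p Lp, 0, by rw [hsp0, h1], rfl, by simpa using hR0,
        ?_, ?_, ?_⟩
      · rw [hsp0, h1, wd_self]
        exact hR0
      · intro i hi
        omega
      · intro i hi
        exact hfar Lp (le_refl _)
  obtain ⟨jL, hjL, cpL, dL, hL0, hL1, hdL, hdLp, hLs, hLfar⟩ := hleft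
  obtain ⟨jR, hjR, cpR, dR, hr0, hr1, hdR, hdRp, hRs, hRfar⟩ := hright
  -- middle segment along p
  obtain ⟨sg, Lsg, hsg0, hsg1, hsgs, hsgmem, hsglen⟩ :=
    path_seg S hS hgen p Lp hp jL jR hjL hjR
  -- length bound for the segment
  have hspsm : (sp : ℝ) - sm ≤ 4*R + 2 := by
    have hn : sp - sm ≤ 2 * k := by omega
    have hn2 : (sp:ℝ) - sm = ((sp - sm : ℕ) : ℝ) := by
      have : sm ≤ sp := by omega
      push_cast [Nat.cast_sub this]
      ring
    rw [hn2]
    have : ((sp - sm : ℕ) : ℝ) ≤ 2 * (k:ℝ) := by exact_mod_cast hn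
    linarith
  have hdpp : wordDist S (p jL) (p jR) ≤ 6*R + 2 := by
    have u1 := wd_triangle S hgen (p jL) (c sm) (p jR)
    have u2 := wd_triangle S hgen (c sm) (c sp) (p jR)
    have u3 : wordDist S (p jL) (c sm) = wordDist S (c sm) (p jL) := wd_symm S hS hgen _ _
    rw [hdmp] at u2
    linarith [hdLp, hdRp, hspsm]
  have hsgR : (Lsg : ℝ) ≤ 24*R + 13 := by
    rcases le_total jL jR with hor | hor
    · have hq := hqg jL jR hor hjR
      have hcast : (Lsg : ℝ) = (jR : ℝ) - jL := by
        rw [hsglen, max_eq_right hor, min_eq_left hor]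
        push_cast [Nat.cast_sub hor]
        ring
      rw [hcast]
      linarith
    · have hq := hqg jR jL hor hjL
      have hsymm : wordDist S (p jR) (p jL) = wordDist S (p jL) (p jR) := wd_symm S hS hgen _ _
      have hcast : (Lsg : ℝ) = (jL : ℝ) - jR := by
        rw [hsglen, max_eq_left hor, min_eq_right hor]
        push_cast [Nat.cast_sub hor]
        ring
      rw [hcast]
      linarith [hsymm ▸ hq]
  -- concatenate: left cap, segment, reversed right cap
  obtain ⟨Q1, hQ10, hQ11, hQ1s, hQ1mem⟩ :=
    path_concat S cpL sg dL Lsg hLs hsgs (by rw [hL1, hsg0])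
  have hrqs : ∀ i, i < dR → wordDist S (cpR (dR - i)) (cpR (dR - (i+1))) ≤ 1 := by
    intro i hi
    have he : dR - i = (dR - (i+1)) + 1 := by omega
    rw [wd_symm S hS hgen, he]
    exact hRs _ (by omega)
  obtain ⟨Q, hQ0, hQL, hQs, hQmem⟩ :=
    path_concat S Q1 (fun i => cpR (dR - i)) (dL + Lsg) dR hQ1s hrqs
      (by rw [hQ11, hsg1, ← hr1]; norm_num)
  set LQ := dL + Lsg + dR with hLQdef
  have hQ0' : Q 0 = c sm := by rw [hQ0, hQ10, hL0]
  have hQL' : Q LQ = c sp := by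
    rw [hQL]
    have : dR - dR = 0 := by omega
    rw [this, hr0]
  -- all points of Q are far from c t0
  have hQfar : ∀ i, i ≤ LQ → R ≤ wordDist S (c t0) (Q i) := by
    intro i hi
    rcases hQmem i hi with ⟨i₁, hi₁, hQe⟩ | ⟨i₂, hi₂, hQe⟩
    · rcases hQ1mem i₁ hi₁ with ⟨j₁, hj₁, hQ1e⟩ | ⟨j₂, hj₂, hQ1e⟩
      · rw [hQe, hQ1e]
        exact hLfar j₁ hj₁
      · rw [hQe, hQ1e]
        obtain ⟨jj, hjj, hje⟩ := hsgmem j₂ hj₂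
        rw [hje]
        exact hfar jj hjj
    · rw [hQe]
      exact hRfar (dR - i₂) (by omega)
  -- the Gromov product vanishes
  have hgp : gprod S (Q 0) (Q LQ) (c t0) = 0 := by
    rw [hQ0', hQL']
    unfold gprod
    rw [hdzm, hdzp, hdmp]
    ring
  -- apply the subdivision lemma
  set n := Nat.clog 2 LQ with hn
  obtain ⟨iQ, hiQ, hbd⟩ := loglemma S hS hgen hyp n LQ
    (Nat.le_pow_clog one_lt_two LQ) Q hQs (c t0)
  rw [hgp] at hbd
  have hRle : R ≤ δ * n + 1 := by
    have := hQfar iQ hiQ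
    linarith
  -- bound n
  have hLQle : (LQ:ℝ) ≤ 26*R + 13 := by
    have : (LQ : ℝ) = (dL : ℝ) + Lsg + dR := by push_cast [hLQdef]; ring
    rw [this]
    linarith [hdL, hdR, hsgR]
  have hLQ2 : 2 ≤ LQ := by
    by_contra hh
    push_neg at hh
    have hzero : n = 0 := by
      rw [hn]
      exact Nat.clog_of_right_le_one (by omega) 2
    rw [hzero] at hRle
    push_cast at hRle
    linarith
  have hpow : (2:ℝ)^(n-1) ≤ (LQ:ℝ) := by
    have hlt := Nat.pow_pred_clog_lt_self (b := 2) one_lt_two (x := LQ) hLQ2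
    exact_mod_cast le_of_lt hlt
  have hLQ1 : (1:ℝ) ≤ (LQ:ℝ) := by exact_mod_cast le_trans (by omega : 1 ≤ 2) hLQ2
  have h3s := nat_le_3sqrt (n-1) (LQ:ℝ) hLQ1 hpow
  have hnle : (n:ℝ) ≤ 3 * Real.sqrt (LQ:ℝ) + 1 := by
    have hh : n ≤ (n-1) + 1 := by omega
    have hh2 : (n:ℝ) ≤ ((n-1 : ℕ):ℝ) + 1 := by exact_mod_cast hh
    linarith
  have hsq1 : Real.sqrt (LQ:ℝ) ≤ Real.sqrt (49*R) := Real.sqrt_le_sqrt (by linarith)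
  have hsq2 : Real.sqrt (49*R) = 7 * Real.sqrt R := by
    rw [show (49:ℝ)*R = 7^2 * R by ring, Real.sqrt_mul (by positivity) R,
      Real.sqrt_sq (by norm_num)]
  have hnfin : (n:ℝ) ≤ 21 * Real.sqrt R + 1 := by
    rw [hsq2] at hsq1
    linarith
  have hsR : 22*δ + 22 ≤ Real.sqrt R := by
    rw [show (22*δ+22 : ℝ) = Real.sqrt ((22*δ+22)^2) from (Real.sqrt_sq (by linarith)).symm]
    exact Real.sqrt_le_sqrt (by linarith)
  have hsqR : Real.sqrt R ^ 2 = R := Real.sq_sqrt hR0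
  have hsR1 : 1 ≤ Real.sqrt R := by linarith
  have hfin : R ≤ δ * (21 * Real.sqrt R + 1) + 1 := by
    have := mul_le_mul_of_nonneg_left hnfin hδ
    linarith
  nlinarith [hsqR, mul_le_mul_of_nonneg_right hsR (Real.sqrt_nonneg R), hsR1, hδ, hfin]

end Morse


section Assemble

variable {G : Type*} [Group G]

/-- Prefix products of a geodesic word give exact distances. -/
lemma geo_chain (S : Set G) (hgen : Gen S) (lg : List G) (hlg1 : ∀ y ∈ lg, y ∈ S)
    (hlg3 : lg.length = wordLenOn S lg.prod) :
    ∀ s t : ℕ, s ≤ t → t ≤ lg.length →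
      wordDist S ((lg.take s).prod) ((lg.take t).prod) = (t : ℝ) - s := by
  intro s t hst htl
  have hseg : lg.take s ++ (lg.take t).drop s = lg.take t := by
    have h0 := List.take_append_drop s (lg.take t)
    rw [List.take_take, min_eq_left hst] at h0
    exact h0
  have hup : wordLenOn S ((lg.take s).prod⁻¹ * (lg.take t).prod) ≤ t - s := by
    have hprod : (lg.take s).prod * ((lg.take t).drop s).prod = (lg.take t).prod := by
      rw [← List.prod_append, hseg]
    have harg : (lg.take s).prod⁻¹ * (lg.take t).prod = ((lg.take t).drop s).prod := by
      rw [← hprod]; group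
    rw [harg]
    refine le_trans (wordLenOn_le S (fun y hy => hlg1 y ?_) rfl) ?_
    · exact List.take_subset t lg (List.drop_subset s _ hy)
    · rw [List.length_drop, List.length_take]
      omega
  have h1 : wordLenOn S (lg.take s).prod ≤ s := by
    refine le_trans (wordLenOn_le S (fun y hy => hlg1 y (List.take_subset s lg hy)) rfl) ?_
    rw [List.length_take]
    omega
  have h3 : wordLenOn S ((lg.take t).prod⁻¹ * lg.prod) ≤ lg.length - t := by
    have hdt : (lg.take t).prod * (lg.drop t).prod = lg.prod := by
      rw [← List.prod_append, List.take_append_drop]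
    have harg : (lg.take t).prod⁻¹ * lg.prod = (lg.drop t).prod := by
      rw [← hdt]; group
    rw [harg]
    refine le_trans (wordLenOn_le S (fun y hy => hlg1 y (List.drop_subset t lg hy)) rfl) ?_
    rw [List.length_drop]
  have h4 : wordLenOn S lg.prod ≤ wordLenOn S (lg.take s).prod
      + wordLenOn S ((lg.take s).prod⁻¹ * (lg.take t).prod)
      + wordLenOn S ((lg.take t).prod⁻¹ * lg.prod) := by
    have e : lg.prod = ((lg.take s).prod * ((lg.take s).prod⁻¹ * (lg.take t).prod))
        * ((lg.take t).prod⁻¹ * lg.prod) := by group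
    calc wordLenOn S lg.prod
        = wordLenOn S (((lg.take s).prod * ((lg.take s).prod⁻¹ * (lg.take t).prod))
          * ((lg.take t).prod⁻¹ * lg.prod)) := by rw [← e]
      _ ≤ wordLenOn S ((lg.take s).prod * ((lg.take s).prod⁻¹ * (lg.take t).prod))
          + wordLenOn S ((lg.take t).prod⁻¹ * lg.prod) := wordLenOn_mul_le S hgen _ _
      _ ≤ wordLenOn S (lg.take s).prod
          + wordLenOn S ((lg.take s).prod⁻¹ * (lg.take t).prod)
          + wordLenOn S ((lg.take t).prod⁻¹ * lg.prod) := by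
            have := wordLenOn_mul_le S hgen (lg.take s).prod
              ((lg.take s).prod⁻¹ * (lg.take t).prod)
            omega
  have hdown : t - s ≤ wordLenOn S ((lg.take s).prod⁻¹ * (lg.take t).prod) := by omega
  have heq : wordLenOn S ((lg.take s).prod⁻¹ * (lg.take t).prod) = t - s :=
    le_antisymm hup hdown
  rw [wordDist, heq, Nat.cast_sub hst]

/-- Steps of the path associated with a word over the relative alphabet. -/
lemma word_path_step (K : Subgroup G) (X : Set G) (hX : ∀ x ∈ X, x⁻¹ ∈ X)
    (l : List (RelLetter K X)) (i : ℕ) (hi : i < l.length) :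
    wordDist ((K : Set G) ∪ X) (theta K X (evalWord K X (l.take i)))
      (theta K X (evalWord K X (l.take (i+1)))) ≤ 1 := by
  have htake : l.take (i+1) = l.take i ++ [l[i]] := (List.take_concat_get' l i hi).symm
  have hsingle : evalWord K X [l[i]] = evalLetter K X l[i] := by
    show evalLetter K X l[i] * 1 = _
    rw [mul_one]
  rw [wordDist]
  have harg : (theta K X (evalWord K X (l.take i)))⁻¹ * theta K X (evalWord K X (l.take (i+1)))
      = theta K X (evalLetter K X l[i]) := by
    rw [htake, evalWord_append, map_mul, hsingle]
    group
  rw [harg]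
  have hmem := theta_letter_mem K X hX l[i]
  have hle := wordLenOn_le ((K : Set G) ∪ X) (q := theta K X (evalLetter K X l[i]))
    (l := [theta K X (evalLetter K X l[i])]) (by simpa using hmem) (by simp)
  simp only [List.length_singleton] at hle
  exact_mod_cast hle

end Assemble

end QMAux


universe u

/-- If `Γ(G, K ⊔ X)` is `δ`-hyperbolic and `g` lies within distance `m` of a geodesic
from `1` to `gh`, then `|Φ_C(g) + Φ_C(h) − Φ_C(gh)| ≤ M·C`, for a constant `M ≥ 1`
depending only on `δ` and `m`. -/
theorem PhiC_weak_quasimorphism (δ m : ℝ) (hδ : 0 ≤ δ) (hm : 0 ≤ m) :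
    ∃ M : ℝ, 1 ≤ M ∧ ∀ (G : Type u) [Group G], ∀ (K : Subgroup G) (X : Set G),
      (∀ x ∈ X, x⁻¹ ∈ X) →
      Function.Surjective (theta K X) →
      HypWith ((K : Set G) ∪ X) δ →
      ∀ φ : ↥K → ℝ, IsQM φ → IsAntisym φ →
      ∀ C₀ : ℝ, 0 < C₀ → LinearlyControlled K X φ C₀ →
      ∀ C : ℝ, 20 * C₀ + 11 * qmDefect φ ≤ C →
      ∀ g h : G,
        (∃ lg : List G, (∀ y ∈ lg, y ∈ (K : Set G) ∪ X) ∧ lg.prod = g * h ∧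
          lg.length = wordLenOn ((K : Set G) ∪ X) (g * h) ∧
          ∃ i : ℕ, wordDist ((K : Set G) ∪ X) g ((lg.take i).prod) ≤ m) →
        |PhiC K X φ C g + PhiC K X φ C h - PhiC K X φ C (g * h)| ≤ M * C := by
  
  classical
  refine ⟨2*((22*δ+22)^2 + 100) + 2*m + 4, by nlinarith [sq_nonneg (22*δ+22)], ?_⟩
  intro G _ K X hX hsurj hyp φ hqm hanti C₀ hC0 hctl C hC g h hgeo
  have hD0 : 0 ≤ qmDefect φ := QMAux.defect_nonneg hqm
  have hCpos : 0 < C := by linarith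
  have hC2 : 2*C₀ ≤ C := by linarith
  have hD1 : qmDefect φ ≤ C := by linarith
  have hSsym : QMAux.Symm ((K : Set G) ∪ X) := by
    rintro s hs
    rcases hs with hs | hs
    · exact Or.inl (inv_mem hs)
    · exact Or.inr (hX s hs)
  have hgen : QMAux.Gen ((K : Set G) ∪ X) := by
    intro q
    obtain ⟨a, ha⟩ := hsurj q
    obtain ⟨l, hl⟩ := QMAux.exists_word K X a
    refine ⟨l.map (fun A => theta K X (evalLetter K X A)), ?_, ?_⟩
    · intro y hy
      simp only [List.mem_map] at hy
      obtain ⟨A, _, rfl⟩ := hy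
      exact QMAux.theta_letter_mem K X hX A
    · rw [QMAux.theta_evalWord_prod, hl, ha]
  obtain ⟨lg, hlg1, hlg2, hlg3, i0, hi0⟩ := hgeo
  -- near-optimal word for g*h
  obtain ⟨a, ha, hopt⟩ := QMAux.exists_near_opt K X φ C hsurj hCpos (g*h)
  obtain ⟨l, hl, hcount, hchain, hlen2⟩ := QMAux.exists_clean_word K X a
  -- the two paths
  have hcex : ∀ s t : ℕ, s ≤ t → t ≤ lg.length →
      wordDist ((K:Set G) ∪ X) ((lg.take s).prod) ((lg.take t).prod) = (t:ℝ) - s := by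
    refine QMAux.geo_chain _ hgen lg hlg1 ?_
    rw [hlg2]
    exact hlg3
  have hpstep : ∀ i, i < l.length →
      wordDist ((K:Set G) ∪ X) (theta K X (evalWord K X (l.take i)))
        (theta K X (evalWord K X (l.take (i+1)))) ≤ 1 :=
    fun i hi => QMAux.word_path_step K X hX l i hi
  have hqg := QMAux.tight_window K X φ C₀ C hqm hanti hctl hC0 hC hsurj hgen ha hopt hl
    hcount hchain
  have hc0 : (lg.take 0).prod = theta K X (evalWord K X (l.take 0)) := by
    simp [QMAux.evalWord_nil]
  have hcL : (lg.take lg.length).prod = theta K X (evalWord K X (l.take l.length)) := by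
    rw [List.take_length, List.take_length, hl, ha, hlg2]
  have hboot := QMAux.bootstrap ((K:Set G) ∪ X) hSsym hgen hδ hyp lg.length l.length
    (fun t => (lg.take t).prod) (fun j => theta K X (evalWord K X (l.take j)))
    hcex hpstep hqg hc0 hcL
  have hct1 : (lg.take (min i0 lg.length)).prod = (lg.take i0).prod := by
    rcases le_total i0 lg.length with hcase | hcase
    · rw [min_eq_left hcase]
    · rw [min_eq_right hcase, List.take_length, List.take_of_length_le hcase]
  obtain ⟨jj, hjj, hjd⟩ := hboot (min i0 lg.length) (by omega)
  have hgp : wordDist ((K:Set G) ∪ X) g (theta K X (evalWord K X (l.take jj)))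
      ≤ m + ((22*δ+22)^2 + 100) := by
    have htri := QMAux.wd_triangle ((K:Set G) ∪ X) hgen g ((lg.take (min i0 lg.length)).prod)
      (theta K X (evalWord K X (l.take jj)))
    have hgc : wordDist ((K:Set G) ∪ X) g ((lg.take (min i0 lg.length)).prod) ≤ m := by
      rw [hct1]
      exact hi0
    linarith
  -- connector word
  obtain ⟨lt, hlt1, hlt2, hlt3⟩ := QMAux.exists_geo ((K:Set G) ∪ X) hgen
    ((theta K X (evalWord K X (l.take jj)))⁻¹ * g)
  have hltlen : (lt.length : ℝ) ≤ m + ((22*δ+22)^2 + 100) := by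
    have he : (lt.length : ℝ)
        = wordDist ((K:Set G) ∪ X) (theta K X (evalWord K X (l.take jj))) g := by
      rw [wordDist, hlt3]
    rw [he, QMAux.wd_symm _ hSsym hgen]
    exact hgp
  obtain ⟨tw, htw1, htw2, htw3⟩ := QMAux.exists_relword_of_gword K X lt hlt1
  -- split the near-optimal word
  have hPS : evalWord K X (l.take jj) * evalWord K X (l.drop jj) = a := by
    rw [← QMAux.evalWord_append, List.take_append_drop, hl]
  have hθpre : theta K X (evalWord K X (l.take jj)) * theta K X (evalWord K X (l.drop jj))
      = g * h := by
    rw [← map_mul, hPS, ha]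
  have hθT : theta K X (evalWord K X tw)
      = (theta K X (evalWord K X (l.take jj)))⁻¹ * g := by
    rw [htw1, hlt2]
  have hθb : theta K X (evalWord K X (l.take jj) * evalWord K X tw) = g := by
    rw [map_mul, hθT]
    group
  have hθc : theta K X ((evalWord K X tw)⁻¹ * evalWord K X (l.drop jj)) = h := by
    rw [map_mul, map_inv, hθT]
    have hsuf : theta K X (evalWord K X (l.drop jj))
        = (theta K X (evalWord K X (l.take jj)))⁻¹ * (g * h) := by
      rw [← hθpre]
      group
    rw [hsuf]
    group
  have hb1 := QMAux.PhiC_le_phitC K X φ C₀ C hqm hctl hC2 hsurj hθb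
  have hb2 := QMAux.PhiC_le_phitC K X φ C₀ C hqm hctl hC2 hsurj hθc
  -- quasimorphism estimate for the two halves
  have hetaprod : eta K X (evalWord K X (l.take jj) * evalWord K X tw)
      * eta K X ((evalWord K X tw)⁻¹ * evalWord K X (l.drop jj)) = eta K X a := by
    rw [← map_mul]
    congr 1
    rw [← hPS]
    group
  have hsum : φ (eta K X (evalWord K X (l.take jj) * evalWord K X tw))
      + φ (eta K X ((evalWord K X tw)⁻¹ * evalWord K X (l.drop jj)))
      ≤ φ (eta K X a) + qmDefect φ := by
    have hd := abs_le.mp (QMAux.defect_bound hqm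
      (eta K X (evalWord K X (l.take jj) * evalWord K X tw))
      (eta K X ((evalWord K X tw)⁻¹ * evalWord K X (l.drop jj))))
    rw [hetaprod] at hd
    linarith [hd.1]
  -- xLen bounds
  have hx1 : xLen K X (evalWord K X (l.take jj) * evalWord K X tw)
      ≤ (l.take jj).countP Sum.isRight + lt.length := by
    have hz := QMAux.xLen_le K X (l := l.take jj ++ tw)
      (a := evalWord K X (l.take jj) * evalWord K X tw) (by rw [QMAux.evalWord_append])
    rw [List.countP_append] at hz
    omega
  have hx2 : xLen K X ((evalWord K X tw)⁻¹ * evalWord K X (l.drop jj))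
      ≤ lt.length + (l.drop jj).countP Sum.isRight := by
    have hz := QMAux.xLen_le K X (l := QMAux.invWord K X tw ++ l.drop jj)
      (a := (evalWord K X tw)⁻¹ * evalWord K X (l.drop jj))
      (by rw [QMAux.evalWord_append, QMAux.evalWord_invWord])
    rw [List.countP_append, QMAux.countP_invWord] at hz
    omega
  have hxsplit : (l.take jj).countP Sum.isRight + (l.drop jj).countP Sum.isRight
      = xLen K X a := by
    rw [← hcount, ← List.countP_append, List.take_append_drop]
  -- putting the upper bound together
  have hphi1 : phitC K X φ C (evalWord K X (l.take jj) * evalWord K X tw)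
      + phitC K X φ C ((evalWord K X tw)⁻¹ * evalWord K X (l.drop jj))
      ≤ φ (eta K X a) + qmDefect φ + C * (xLen K X a : ℝ)
        + 2 * C * (m + ((22*δ+22)^2 + 100)) := by
    unfold phitC
    have c1 : (xLen K X (evalWord K X (l.take jj) * evalWord K X tw) : ℝ)
        ≤ ((l.take jj).countP Sum.isRight : ℝ) + (lt.length : ℝ) := by exact_mod_cast hx1
    have c2 : (xLen K X ((evalWord K X tw)⁻¹ * evalWord K X (l.drop jj)) : ℝ)
        ≤ (lt.length : ℝ) + ((l.drop jj).countP Sum.isRight : ℝ) := by exact_mod_cast hx2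
    have c3 : ((l.take jj).countP Sum.isRight : ℝ) + ((l.drop jj).countP Sum.isRight : ℝ)
        = (xLen K X a : ℝ) := by exact_mod_cast hxsplit
    have m1 := mul_le_mul_of_nonneg_left c1 (le_of_lt hCpos)
    have m2 := mul_le_mul_of_nonneg_left c2 (le_of_lt hCpos)
    have m3 := mul_le_mul_of_nonneg_left hltlen (le_of_lt hCpos)
    have m4 : C * (xLen K X a : ℝ) = C * ((l.take jj).countP Sum.isRight : ℝ)
        + C * ((l.drop jj).countP Sum.isRight : ℝ) := by
      rw [← c3]
      ring
    linarith [hsum, m1, m2, m3, m4]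
  have hup : PhiC K X φ C g + PhiC K X φ C h
      ≤ PhiC K X φ C (g*h) + C + qmDefect φ + 2 * C * (m + ((22*δ+22)^2 + 100)) := by
    have hopt' : φ (eta K X a) + C * (xLen K X a : ℝ) < PhiC K X φ C (g*h) + C := hopt
    linarith [hb1, hb2, hphi1]
  have hsub := QMAux.PhiC_subadd K X φ C₀ C hqm hctl hC2 hCpos hsurj g h
  have hMCge : C ≤ (2*((22*δ+22)^2 + 100) + 2*m + 4) * C := by
    nlinarith [mul_nonneg (mul_nonneg hδ hδ) (le_of_lt hCpos),
      mul_nonneg hδ (le_of_lt hCpos), mul_nonneg hm (le_of_lt hCpos), le_of_lt hCpos]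
  refine abs_le.mpr ⟨?_, ?_⟩
  · linarith [hsub, hD1, hMCge]
  · linarith [hup, hD1, hCpos]
end

section
/- In the setting below, let φ be a G-quasi-invariant quasimorphism on K. If the presentation Ḡ = ⟨X̄ | R̄⟩ has a linear isoperimetric function and sup{ |φ(k_r)| : r̄ ∈ R̄ } is finite, then φ is linearly (G,X)-controlled. -/
open Monoid
open scoped Monoid.Coprod

open QMExt


section AuxQMList
variable {H : Type*} [Group H] (φ : H → ℝ) (D : ℝ)

omit [Group H] in
theorem QMExtAux.abs_sum_le_of_forall (E : ℝ) (ls : List H) (h : ∀ a ∈ ls, |φ a| ≤ E) :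
    |(ls.map φ).sum| ≤ E * ls.length := by
  induction ls with
  | nil => simp
  | cons a t ih =>
    simp only [List.map_cons, List.sum_cons, List.length_cons]
    push_cast
    calc |φ a + (t.map φ).sum| ≤ |φ a| + |(t.map φ).sum| := abs_add_le _ _
      _ ≤ E + E * t.length := by
          have h1 := ih (fun b hb => h b (List.mem_cons_of_mem _ hb))
          have h2 := h a (List.mem_cons_self)
          linarith
      _ = E * (t.length + 1) := by ring

theorem QMExtAux.abs_phi_one (hD : ∀ g h : H, |φ g + φ h - φ (g * h)| ≤ D) : |φ 1| ≤ D := by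
  have := hD 1 1
  simp at this
  exact this

theorem QMExtAux.abs_phi_prod_sub_sum (hD : ∀ g h : H, |φ g + φ h - φ (g * h)| ≤ D)
    (ls : List H) : |φ ls.prod - (ls.map φ).sum| ≤ D * ls.length + D := by
  induction ls with
  | nil =>
    simpa using QMExtAux.abs_phi_one φ D hD
  | cons k t ih =>
    have h1 := hD k t.prod
    have h2 : |φ (k * t.prod) - (φ k + (t.map φ).sum)| ≤
        |φ k + φ t.prod - φ (k * t.prod)| + |φ t.prod - (t.map φ).sum| := by
      rw [← abs_neg (φ k + φ t.prod - φ (k * t.prod))]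
      calc _ = |(-(φ k + φ t.prod - φ (k * t.prod))) + (φ t.prod - (t.map φ).sum)| := by
              ring_nf
           _ ≤ _ := abs_add_le _ _
    simp only [List.prod_cons, List.map_cons, List.sum_cons, List.length_cons]
    push_cast
    calc |φ (k * t.prod) - (φ k + (t.map φ).sum)| ≤ D + (D * t.length + D) := by linarith
      _ = D * (t.length + 1) + D := by ring

omit [Group H] in
theorem QMExtAux.abs_sum_sub_sum_of_forall₂ (E : ℝ) {l₁ l₂ : List H}
    (h : List.Forall₂ (fun a b => |φ a - φ b| ≤ E) l₁ l₂) :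
    |(l₁.map φ).sum - (l₂.map φ).sum| ≤ E * l₁.length := by
  induction h with
  | nil => simp
  | @cons a b t₁ t₂ hab _ ih =>
    simp only [List.map_cons, List.sum_cons, List.length_cons]
    push_cast
    calc |φ a + (t₁.map φ).sum - (φ b + (t₂.map φ).sum)|
        ≤ |φ a - φ b| + |(t₁.map φ).sum - (t₂.map φ).sum| := by
          rw [show φ a + (t₁.map φ).sum - (φ b + (t₂.map φ).sum)
            = (φ a - φ b) + ((t₁.map φ).sum - (t₂.map φ).sum) by ring]
          exact abs_add_le _ _
      _ ≤ E + E * t₁.length := by linarith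
      _ = E * (t₁.length + 1) := by ring
end AuxQMList

namespace QMExtAux
open QMExt
variable {Q : Type*} [Group Q] (P : Subgroup Q) (Y : Set Q)

def letterK : RelLetter P Y → ↥P
  | Sum.inl k => k
  | Sum.inr _ => 1

def letterX : RelLetter P Y → FreeGroup ↥Y
  | Sum.inl _ => 1
  | Sum.inr (x, true) => FreeGroup.of x
  | Sum.inr (x, false) => (FreeGroup.of x)⁻¹

noncomputable def xword (l : List (RelLetter P Y)) : FreeGroup ↥Y := (l.map (letterX P Y)).prod

lemma evalWord_nil : evalWord P Y [] = 1 := rfl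

lemma evalWord_cons (h : RelLetter P Y) (t : List (RelLetter P Y)) :
    evalWord P Y (h :: t) = evalLetter P Y h * evalWord P Y t := by
  simp [evalWord]

lemma eta_evalLetter (h : RelLetter P Y) : eta P Y (evalLetter P Y h) = letterK P Y h := by
  rcases h with k | ⟨x, _ | _⟩ <;> simp [evalLetter, eta, letterK]

lemma eta_evalWord (l : List (RelLetter P Y)) :
    eta P Y (evalWord P Y l) = (l.map (letterK P Y)).prod := by
  induction l with
  | nil => simp [evalWord_nil]
  | cons h t ih => rw [evalWord_cons, map_mul, eta_evalLetter, List.map_cons, List.prod_cons, ih]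

lemma exists_word (a : ↥P ∗ FreeGroup ↥Y) :
    ∃ l : List (RelLetter P Y), evalWord P Y l = a := by
  induction a using Coprod.induction_on with
  | inl k => exact ⟨[Sum.inl k], by simp [evalWord, evalLetter]⟩
  | inr v =>
    induction v using FreeGroup.induction_on with
    | C1 => exact ⟨[], by simp [evalWord_nil]⟩
    | of x => exact ⟨[Sum.inr (x, true)], by simp [evalWord, evalLetter]⟩
    | inv_of x _ => exact ⟨[Sum.inr (x, false)], by simp [evalWord, evalLetter]⟩
    | mul v w hv hw =>
      obtain ⟨lv, hlv⟩ := hv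
      obtain ⟨lw, hlw⟩ := hw
      exact ⟨lv ++ lw, by simp [evalWord, hlv.symm, hlw.symm, evalWord]⟩
  | mul x y hx hy =>
    obtain ⟨lx, hlx⟩ := hx
    obtain ⟨ly, hly⟩ := hy
    exact ⟨lx ++ ly, by simp [evalWord, hlx.symm, hly.symm]⟩

lemma exists_word_len (a : ↥P ∗ FreeGroup ↥Y) {n : ℕ} (hn : wordLen P Y a ≤ n) :
    ∃ l : List (RelLetter P Y), evalWord P Y l = a ∧ l.length ≤ n := by
  obtain ⟨l, hl⟩ := exists_word P Y a
  have hne : {m | ∃ l : List (RelLetter P Y), evalWord P Y l = a ∧ l.length = m}.Nonempty :=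
    ⟨l.length, l, hl, rfl⟩
  obtain ⟨l', hl', hlen⟩ := Nat.sInf_mem hne
  exact ⟨l', hl', by rw [hlen]; exact hn⟩

variable [P.Normal]

noncomputable def conjP (g : Q) (k : ↥P) : ↥P :=
  ⟨g * k * g⁻¹, Subgroup.Normal.conj_mem ‹P.Normal› (k : Q) k.2 g⟩

lemma conjP_coe (g : Q) (k : ↥P) : (conjP P g k : Q) = g * k * g⁻¹ := rfl

lemma conj_prod (g : Q) (ks : List ↥P) :
    ((ks.map (conjP P g)).map P.subtype).prod
      = g * (ks.map P.subtype).prod * g⁻¹ := by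
  induction ks with
  | nil => simp
  | cons k t ih =>
    simp only [List.map_cons, List.prod_cons, ih]
    rw [show P.subtype (conjP P g k) = g * (P.subtype k) * g⁻¹ from rfl]
    group

omit [P.Normal] in
lemma theta_evalLetter_mul (h : RelLetter P Y) :
    theta P Y (evalLetter P Y h) * theta P Y (Coprod.inl (letterK P Y h))⁻¹ =
      theta P Y (Coprod.inr (letterX P Y h)) := by
  rcases h with k | ⟨x, _ | _⟩ <;>
    simp [letterX, letterK, evalLetter, theta]

lemma exists_conj_list (l : List (RelLetter P Y)) :
    ∃ ks : List ↥P,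
      List.Forall₂ (fun k k' : ↥P => IsConj (k : Q) (k' : Q)) (l.map (letterK P Y)) ks ∧
      theta P Y (evalWord P Y l) =
        (ks.map P.subtype).prod * theta P Y (Coprod.inr (xword P Y l)) := by
  induction l with
  | nil => exact ⟨[], by simp, by simp [evalWord_nil, xword]⟩
  | cons h t ih =>
    obtain ⟨ks, hfa, heq⟩ := ih
    have hxw : xword P Y (h :: t) = letterX P Y h * xword P Y t := by
      simp [xword]
    rcases h with k | ⟨x, b⟩
    · refine ⟨k :: ks, List.Forall₂.cons (IsConj.refl _) hfa, ?_⟩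
      rw [evalWord_cons, map_mul, heq, hxw]
      have h1 : theta P Y (evalLetter P Y (Sum.inl k)) = P.subtype k := by
        simp [evalLetter, theta]
      have h2 : theta P Y (Coprod.inr (letterX P Y (Sum.inl k))) = 1 := by
        simp [letterX, theta]
      simp only [List.map_cons, List.prod_cons, map_mul, h1, hxw, h2, letterX, one_mul,
        mul_assoc]
    · set g : Q := theta P Y (evalLetter P Y (Sum.inr (x, b))) with hg
      refine ⟨(1 : ↥P) :: ks.map (conjP P g), ?_, ?_⟩
      · refine List.Forall₂.cons ?_ ?_
        · show IsConj ((letterK P Y (Sum.inr (x,b)) : ↥P) : Q) ((1 : ↥P) : Q)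
          simp [letterK]
        · rw [List.forall₂_map_right_iff]
          refine hfa.imp ?_
          intro a b' hab
          refine hab.trans ?_
          rw [isConj_iff]
          exact ⟨g, (conjP_coe P g b').symm⟩
      · rw [evalWord_cons, map_mul, heq, hxw]
        have hgy : theta P Y (Coprod.inr (letterX P Y (Sum.inr (x, b)))) = g := by
          have := theta_evalLetter_mul P Y (Sum.inr (x, b))
          simp only [letterK] at this
          rw [← this, ← hg]
          simp
        simp only [List.map_cons, List.prod_cons, map_mul, conj_prod, hgy,
          OneMemClass.coe_one, one_mul, map_one]
        clear_value g
        rw [← hg]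
        group

omit [P.Normal] in
lemma exists_mk_map_xword {A : Type*} (f : ↥Y → A) (l : List (RelLetter P Y)) :
    ∃ L : List (A × Bool), FreeGroup.mk L = FreeGroup.map f (xword P Y l) ∧
      L.length ≤ l.length := by
  induction l with
  | nil => exact ⟨[], by simp [xword, FreeGroup.one_eq_mk], by simp⟩
  | cons h t ih =>
    obtain ⟨L, hL, hlen⟩ := ih
    have hxw : xword P Y (h :: t) = letterX P Y h * xword P Y t := by simp [xword]
    have hof : ∀ a : A, FreeGroup.of a = FreeGroup.mk [(a, true)] := fun _ => rfl
    rcases h with k | ⟨x, b⟩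
    · exact ⟨L, by simp [hxw, letterX, hL], hlen.trans (by simp)⟩
    · refine ⟨(f x, b) :: L, ?_, by simpa using Nat.succ_le_succ hlen⟩
      rw [hxw, map_mul, ← hL]
      have hone : FreeGroup.map f (letterX P Y (Sum.inr (x, b))) = FreeGroup.mk [(f x, b)] := by
        cases b
        · show FreeGroup.map f (FreeGroup.of x)⁻¹ = _
          rw [map_inv, FreeGroup.map.of, hof, FreeGroup.inv_mk]
          simp [FreeGroup.invRev]
        · show FreeGroup.map f (FreeGroup.of x) = _
          rw [FreeGroup.map.of, hof]
      rw [hone, FreeGroup.mul_mk]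
      rfl

end QMExtAux

set_option maxHeartbeats 1000000 in
/-- Criterion for being controlled, for normal subgroups: if `φ` is a `G`-quasi-invariant
quasimorphism on `K ⊴ G`, the presentation `Ḡ = ⟨X̄ ∣ R̄⟩` of `Ḡ = G/K` has a linear
isoperimetric function, and `sup { |φ(k_r)| ∣ r̄ ∈ R̄ }` is finite, then `φ` is linearly
`(G,X)`-controlled. -/
theorem controlled_of_quotient_linear_isoperimetric {G : Type*} [Group G]
    (K : Subgroup G) [K.Normal]
    (Xbar : Set (G ⧸ K)) (Rbar : Set (FreeGroup ↥Xbar))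
    (hsurj : Function.Surjective
      (FreeGroup.lift (fun x : ↥Xbar => (x : G ⧸ K)) : FreeGroup ↥Xbar →* G ⧸ K))
    (hker : Subgroup.normalClosure Rbar =
      (FreeGroup.lift (fun x : ↥Xbar => (x : G ⧸ K)) : FreeGroup ↥Xbar →* G ⧸ K).ker)
    (A B : ℝ)
    (hf : IsoFn (FreeGroup.lift (fun x : ↥Xbar => (x : G ⧸ K))) Rbar (fun n => A * n + B))
    (σ : ↥Xbar → G) (hσ : ∀ x : ↥Xbar, QuotientGroup.mk' K (σ x) = ↑x)
    (φ : ↥K → ℝ) (hqm : IsQM φ) (hqi : IsGQuasiInvariant K φ)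
    (hbdd : ∃ B' : ℝ, ∀ r ∈ Rbar, ∀ k : ↥K,
      theta K (Set.range σ)
        (Coprod.inr (FreeGroup.map (Set.rangeFactorization σ) r)) = ↑k →
      |φ k| ≤ B') :
    ∃ C₀ : ℝ, 0 < C₀ ∧ LinearlyControlled K (Set.range σ) φ C₀ := by
  classical
  obtain ⟨D₀, hD₀⟩ := hqm
  obtain ⟨DG₀, hDG₀⟩ := hqi
  obtain ⟨B', hB'⟩ := hbdd
  set D : ℝ := max D₀ 0 with hDdef
  have hD : ∀ g h : ↥K, |φ g + φ h - φ (g * h)| ≤ D :=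
    fun g h => (hD₀ g h).trans (le_max_left _ _)
  have hD0 : (0:ℝ) ≤ D := le_max_right _ _
  set DG : ℝ := max DG₀ 0 with hDGdef
  have hDG : ∀ k₁ k₂ : ↥K, IsConj (k₁ : G) (k₂ : G) → |φ k₁ - φ k₂| ≤ DG :=
    fun k₁ k₂ hc => (hDG₀ k₁ k₂ hc).trans (le_max_left _ _)
  have hDG0 : (0:ℝ) ≤ DG := le_max_right _ _
  set X : Set G := Set.range σ with hXdef
  set lft : FreeGroup ↥Xbar →* G ⧸ K :=
    (FreeGroup.lift (fun x : ↥Xbar => (x : G ⧸ K))) with hlftdef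
  set ρ : ↥X → ↥Xbar := Set.rangeSplitting σ with hρdef
  set sfn : FreeGroup ↥Xbar →* FreeGroup ↥X :=
    FreeGroup.map (Set.rangeFactorization σ) with hsfndef
  set barm : FreeGroup ↥X →* FreeGroup ↥Xbar := FreeGroup.map ρ with hbarmdef
  set Θ : FreeGroup ↥Xbar →* G :=
    (theta K X).comp ((Coprod.inr : FreeGroup ↥X →* (↥K ∗ FreeGroup ↥X)).comp sfn) with hΘdef
  set Θ₂ : FreeGroup ↥X →* G :=
    (theta K X).comp (Coprod.inr : FreeGroup ↥X →* (↥K ∗ FreeGroup ↥X)) with hΘ₂def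
  have hΘof : ∀ x : ↥Xbar, Θ (FreeGroup.of x) = σ x := by
    intro x
    simp [hΘdef, hsfndef, FreeGroup.map.of, theta, Set.rangeFactorization_coe]
  have hΘ₂of : ∀ x : ↥X, Θ₂ (FreeGroup.of x) = (x : G) := by
    intro x
    simp [hΘ₂def, theta]
  have hπΘ : ∀ w : FreeGroup ↥Xbar, (QuotientGroup.mk' K) (Θ w) = lft w := by
    have hcomp : (QuotientGroup.mk' K).comp Θ = lft := by
      apply FreeGroup.ext_hom
      intro x
      simp only [MonoidHom.comp_apply, hΘof, hlftdef, FreeGroup.lift_apply_of]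
      exact hσ x
    intro w
    have := congrFun (congrArg DFunLike.coe hcomp) w
    simpa using this
  have hπΘ₂ : ∀ v : FreeGroup ↥X, (QuotientGroup.mk' K) (Θ₂ v) = lft (barm v) := by
    have hcomp : (QuotientGroup.mk' K).comp Θ₂ = lft.comp barm := by
      apply FreeGroup.ext_hom
      intro x
      simp only [MonoidHom.comp_apply, hΘ₂of, hbarmdef, FreeGroup.map.of, hlftdef,
        FreeGroup.lift_apply_of]
      have h1 : σ (ρ x) = (x : G) := Set.apply_rangeSplitting σ x
      rw [← h1]
      exact hσ (ρ x)
    intro v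
    have := congrFun (congrArg DFunLike.coe hcomp) v
    simpa using this
  have hsb : ∀ v : FreeGroup ↥X, sfn (barm v) = v := by
    intro v
    rw [hsfndef, hbarmdef, FreeGroup.map.comp]
    have hid : (Set.rangeFactorization σ) ∘ ρ = id := by
      funext x
      exact Set.leftInverse_rangeSplitting σ x
    rw [hid]
    exact FreeGroup.map.id v
  set E : ℝ := |B'| + DG with hEdef
  have hE0 : (0:ℝ) ≤ E := by positivity
  set c₁ : ℝ := (E + D) * (|A| + |B|) with hc₁def
  have hc₁0 : (0:ℝ) ≤ c₁ := by positivity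
  refine ⟨c₁ + 7*D + DG + 1, by linarith, ?_⟩
  intro n a ha hlen
  beta_reduce
  obtain ⟨l, hl, hllen⟩ := QMExtAux.exists_word_len K X a hlen
  obtain ⟨ks, hfa, heq⟩ := QMExtAux.exists_conj_list K X l
  set w : FreeGroup ↥X := QMExtAux.xword K X l with hwdef
  set klist : List ↥K := l.map (QMExtAux.letterK K X) with hklistdef
  have hθa : theta K X a = 1 := ha
  rw [hl, hθa] at heq
  have hprod_u : (ks.map K.subtype).prod * Θ₂ w = 1 := heq.symm
  have huK : Θ₂ w ∈ K := by
    have h1 : Θ₂ w = ((ks.map K.subtype).prod)⁻¹ := (inv_eq_of_mul_eq_one_right hprod_u).symm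
    rw [h1]
    refine K.inv_mem (K.list_prod_mem ?_)
    intro g hg
    obtain ⟨k, _, rfl⟩ := List.mem_map.1 hg
    exact k.2
  set u' : ↥K := ⟨Θ₂ w, huK⟩ with hu'def
  have hksprod : ks.prod = u'⁻¹ := by
    apply Subtype.coe_injective
    show ((ks.prod : ↥K) : G) = ((u'⁻¹ : ↥K) : G)
    have h1 : ((ks.prod : ↥K) : G) = (ks.map (fun k : ↥K => (k : G))).prod :=
      SubmonoidClass.coe_list_prod ks
    have h2 : ks.map (fun k : ↥K => (k : G)) = ks.map K.subtype := rfl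
    have h3 : (ks.map K.subtype).prod = (Θ₂ w)⁻¹ := eq_inv_of_mul_eq_one_left hprod_u
    rw [h1, h2, h3]
    rfl
  have hbarker : barm w ∈ lft.ker := by
    rw [MonoidHom.mem_ker, ← hπΘ₂ w]
    exact (QuotientGroup.eq_one_iff _).2 huK
  have hfree : freeLen (barm w) ≤ n := by
    obtain ⟨L, hLmk, hLlen⟩ := QMExtAux.exists_mk_map_xword K X ρ l
    exact le_trans (Nat.sInf_le ⟨L, hLmk, rfl⟩) (hLlen.trans hllen)
  obtain ⟨lp, hlpR, hlpprod, hlplen⟩ := hf n (barm w) hbarker hfree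
  have hu_eq : Θ₂ w = (lp.map (fun p => Θ p.1 * Θ p.2 * (Θ p.1)⁻¹)).prod := by
    have h1 : Θ₂ w = Θ (barm w) := by
      rw [hΘdef]
      simp only [MonoidHom.comp_apply, hsb]
      rfl
    rw [h1, ← hlpprod, map_list_prod, List.map_map]
    refine congrArg List.prod (List.map_congr_left ?_)
    intro p _
    simp
  have hΘ2mem : ∀ p ∈ lp, Θ p.2 ∈ K := by
    intro p hp
    have h2 : p.2 ∈ lft.ker := by
      rw [hlftdef, ← hker]
      exact Subgroup.subset_normalClosure (hlpR p hp)
    rw [MonoidHom.mem_ker] at h2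
    have h3 := hπΘ p.2
    rw [h2] at h3
    exact (QuotientGroup.eq_one_iff _).1 h3
  set fP : FreeGroup ↥Xbar × FreeGroup ↥Xbar → ↥K := fun p =>
    if hp : Θ p.1 * Θ p.2 * (Θ p.1)⁻¹ ∈ K then ⟨_, hp⟩ else 1 with hfPdef
  have hfcoe : ∀ p ∈ lp, (fP p : G) = Θ p.1 * Θ p.2 * (Θ p.1)⁻¹ := by
    intro p hp
    have hm : Θ p.1 * Θ p.2 * (Θ p.1)⁻¹ ∈ K :=
      Subgroup.Normal.conj_mem ‹K.Normal› _ (hΘ2mem p hp) _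
    simp [hfPdef, hm]
  have hu'prod : u' = (lp.map fP).prod := by
    apply Subtype.coe_injective
    show ((u' : ↥K) : G) = (((lp.map fP).prod : ↥K) : G)
    have h1 : (((lp.map fP).prod : ↥K) : G) = ((lp.map fP).map (fun k : ↥K => (k : G))).prod :=
      SubmonoidClass.coe_list_prod _
    rw [h1, List.map_map]
    have h2 : lp.map ((fun k : ↥K => (k : G)) ∘ fP) =
        lp.map (fun p => Θ p.1 * Θ p.2 * (Θ p.1)⁻¹) :=
      List.map_congr_left (fun p hp => hfcoe p hp)
    rw [h2, ← hu_eq]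
  have hfPb : ∀ k' ∈ lp.map fP, |φ k'| ≤ E := by
    intro k' hk'
    obtain ⟨p, hp, rfl⟩ := List.mem_map.1 hk'
    have h1 : |φ ⟨Θ p.2, hΘ2mem p hp⟩| ≤ B' := hB' p.2 (hlpR p hp) ⟨Θ p.2, hΘ2mem p hp⟩ rfl
    have hconj : IsConj ((⟨Θ p.2, hΘ2mem p hp⟩ : ↥K) : G) (fP p : G) := by
      rw [isConj_iff]
      exact ⟨Θ p.1, (hfcoe p hp).symm⟩
    have h2 := hDG _ (fP p) hconj
    have h3 : |φ (fP p)| - |φ ⟨Θ p.2, hΘ2mem p hp⟩| ≤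
        |φ (fP p) - φ ⟨Θ p.2, hΘ2mem p hp⟩| := abs_sub_abs_le_abs_sub _ _
    rw [abs_sub_comm] at h3
    have h4 : B' ≤ |B'| := le_abs_self _
    rw [hEdef]
    linarith
  have h1 := QMExtAux.abs_phi_prod_sub_sum φ D hD (lp.map fP)
  rw [← hu'prod, List.length_map] at h1
  have h2 := QMExtAux.abs_sum_le_of_forall φ E (lp.map fP) hfPb
  rw [List.length_map] at h2
  have hNle : ((lp.length : ℕ) : ℝ) ≤ A * n + B := hlplen
  have hN0 : (0:ℝ) ≤ (lp.length : ℝ) := Nat.cast_nonneg _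
  have hAB : A * n + B ≤ (|A| + |B|) * ((n:ℝ) + 1) := by
    have h₁ : A * n ≤ |A| * n :=
      mul_le_mul_of_nonneg_right (le_abs_self A) (Nat.cast_nonneg n)
    have h₂ : B ≤ |B| := le_abs_self B
    have h₃ : (0:ℝ) ≤ |A| := abs_nonneg A
    have h₄ : (0:ℝ) ≤ |B| := abs_nonneg B
    have h₅ : (0:ℝ) ≤ (n:ℝ) := Nat.cast_nonneg n
    nlinarith
  have hu'abs : |φ u'| - |((lp.map fP).map φ).sum| ≤ |φ u' - ((lp.map fP).map φ).sum| :=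
    abs_sub_abs_le_abs_sub _ _
  have hmul : (E + D) * ((lp.length : ℕ) : ℝ) ≤ (E + D) * (A * n + B) :=
    mul_le_mul_of_nonneg_left hNle (by linarith)
  have hmul2 : (E + D) * (A * n + B) ≤ c₁ * ((n:ℝ) + 1) := by
    calc (E + D) * (A * n + B) ≤ (E + D) * ((|A| + |B|) * ((n:ℝ) + 1)) :=
          mul_le_mul_of_nonneg_left hAB (by linarith)
      _ = c₁ * ((n:ℝ) + 1) := by rw [hc₁def]; ring
  have hu'bound : |φ u'| ≤ c₁ * ((n:ℝ) + 1) + D := by nlinarith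
  -- the K-letter side
  have hmn : ((l.length : ℕ) : ℝ) ≤ (n : ℝ) := by exact_mod_cast hllen
  have hklen : (klist.length : ℝ) = (l.length : ℝ) := by rw [hklistdef, List.length_map]
  have hkslen : (ks.length : ℝ) = (l.length : ℝ) := by
    rw [← hfa.length_eq, List.length_map]
  have hetaa : eta K X a = klist.prod := by
    rw [← hl, QMExtAux.eta_evalWord]
  have h3 := QMExtAux.abs_phi_prod_sub_sum φ D hD klist
  have h4 : |(klist.map φ).sum - (ks.map φ).sum| ≤ DG * klist.length :=
    QMExtAux.abs_sum_sub_sum_of_forall₂ φ DG (hfa.imp (fun a b hab => hDG a b hab))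
  have h5 := QMExtAux.abs_phi_prod_sub_sum φ D hD ks
  have h7 : |φ (u'⁻¹)| ≤ |φ u'| + 2*D := by
    have hh := hD u'⁻¹ u'
    rw [inv_mul_cancel] at hh
    have h1' := QMExtAux.abs_phi_one φ D hD
    have e : φ u'⁻¹ = ((φ u'⁻¹ + φ u' - φ 1) + (- φ u')) + φ 1 := by ring
    calc |φ u'⁻¹| = |((φ u'⁻¹ + φ u' - φ 1) + (- φ u')) + φ 1| := by rw [← e]
      _ ≤ |(φ u'⁻¹ + φ u' - φ 1) + (- φ u')| + |φ 1| := abs_add_le _ _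
      _ ≤ (|φ u'⁻¹ + φ u' - φ 1| + |(- φ u')|) + |φ 1| :=
          add_le_add_left (abs_add_le _ _) _
      _ ≤ (D + |φ u'|) + D := by rw [abs_neg]; exact add_le_add (add_le_add hh le_rfl) h1'
      _ = |φ u'| + 2*D := by ring
  have ha1 : |φ klist.prod| - |(klist.map φ).sum| ≤ D * klist.length + D :=
    le_trans (abs_sub_abs_le_abs_sub _ _) h3
  have ha2 : |(klist.map φ).sum| - |(ks.map φ).sum| ≤ DG * klist.length :=
    le_trans (abs_sub_abs_le_abs_sub _ _) h4
  have ha3 : |(ks.map φ).sum| - |φ ks.prod| ≤ D * ks.length + D := by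
    have hx := abs_sub_abs_le_abs_sub ((ks.map φ).sum) (φ ks.prod)
    rw [abs_sub_comm] at hx
    exact le_trans hx h5
  have ha4 : |φ ks.prod| = |φ (u'⁻¹)| := by rw [hksprod]
  rw [hetaa]
  have hDm : D * ((l.length : ℕ) : ℝ) ≤ D * (n:ℝ) := mul_le_mul_of_nonneg_left hmn hD0
  have hDGm : DG * ((l.length : ℕ) : ℝ) ≤ DG * (n:ℝ) := mul_le_mul_of_nonneg_left hmn hDG0
  have hn0 : (0:ℝ) ≤ (n:ℝ) := Nat.cast_nonneg n
  have hDn0 : (0:ℝ) ≤ D * (n:ℝ) := mul_nonneg hD0 hn0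
  have hDGn0 : (0:ℝ) ≤ DG * (n:ℝ) := mul_nonneg hDG0 hn0
  rw [hklen] at ha1 ha2
  rw [hkslen] at ha3
  linarith
end

section
/- Let 1 → ℤ →^ι E →^π G → 1 be a central extension of groups with E finitely generated. If the central subgroup ι(ℤ) is undistorted in E, then the Euler class of the extension is weakly bounded. -/
open Monoid
open scoped Monoid.Coprod

open QMExt

/-! Undistortedness makes `z ^ k ↦ k` a coarsely Lipschitz function on the central subgroup
`⟨z⟩`, where `z = ι 1`. Its McShane-type extension `φ(e) = inf_k (k + λ |z⁻ᵏ e|)` is finite,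
satisfies `φ(e zᵐ) = φ(e) + m`, and since `z` is central it is `λ`-Lipschitz for left as well
as right multiplication. Normalising a section `s` so that `φ ∘ s` takes values in `[0, 1)`,
the cocycle value `ω(g, h)` equals `φ(s g · s h) - φ(s (g h))`, whose absolute value is at
most `λ |s g| + 1`; the same bound holds for `ω(h, g)`. -/

section WordLength

variable {Q : Type*} [Group Q] {S : Set Q}

lemma submonoid_closure_eq_top_of_inv_mem (hSsym : ∀ s ∈ S, s⁻¹ ∈ S)
    (hSgen : Subgroup.closure S = ⊤) : Submonoid.closure S = ⊤ := by
  have hS : S ∪ S⁻¹ = S := Set.union_eq_left.2 fun s hs => by simpa using hSsym _ hs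
  rw [← hS, ← Subgroup.closure_toSubmonoid, hSgen, Subgroup.top_toSubmonoid]

lemma wordLenOn_prod_le {l : List Q} (hl : ∀ y ∈ l, y ∈ S) : wordLenOn S l.prod ≤ l.length :=
  Nat.sInf_le ⟨l, hl, rfl, rfl⟩

lemma exists_list_length_eq_wordLenOn (hS : Submonoid.closure S = ⊤) (q : Q) :
    ∃ l : List Q, (∀ y ∈ l, y ∈ S) ∧ l.prod = q ∧ l.length = wordLenOn S q := by
  obtain ⟨l, hl, hq⟩ := Submonoid.exists_list_of_mem_closure (hS ▸ Submonoid.mem_top q)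
  exact Nat.sInf_mem (s := {n | ∃ l : List Q, (∀ y ∈ l, y ∈ S) ∧ l.prod = q ∧ l.length = n})
    ⟨l.length, l, hl, hq, rfl⟩

lemma wordLenOn_mul_le (hS : Submonoid.closure S = ⊤) (a b : Q) :
    wordLenOn S (a * b) ≤ wordLenOn S a + wordLenOn S b := by
  obtain ⟨la, hla, rfl, ha⟩ := exists_list_length_eq_wordLenOn hS a
  obtain ⟨lb, hlb, rfl, hb⟩ := exists_list_length_eq_wordLenOn hS b
  rw [← ha, ← hb, ← List.length_append, ← List.prod_append]
  exact wordLenOn_prod_le fun y hy => (List.mem_append.1 hy).elim (hla y) (hlb y)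

lemma wordLenOn_inv_le (hSsym : ∀ s ∈ S, s⁻¹ ∈ S) (hS : Submonoid.closure S = ⊤) (q : Q) :
    wordLenOn S q⁻¹ ≤ wordLenOn S q := by
  obtain ⟨l, hl, rfl, hq⟩ := exists_list_length_eq_wordLenOn hS q
  rw [← hq, List.prod_inv_reverse]
  calc wordLenOn S (l.map (·⁻¹)).reverse.prod ≤ (l.map (·⁻¹)).reverse.length :=
        wordLenOn_prod_le (by simpa using fun y hy => by simpa using hSsym _ (hl _ hy))
    _ = l.length := by simp

end WordLength

section FiberCoord

variable {E : Type*} [Group E] {S : Set E} {lam : ℝ} {z : E}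

noncomputable def fiberCoord (S : Set E) (lam : ℝ) (z e : E) : ℝ :=
  ⨅ k : ℤ, ((k : ℝ) + lam * wordLenOn S (z ^ (-k) * e))

lemma bddBelow_fiberCoord (hSsym : ∀ s ∈ S, s⁻¹ ∈ S) (hS : Submonoid.closure S = ⊤)
    (hlam : 0 ≤ lam) (hundist : ∀ n : ℤ, (|n| : ℝ) ≤ lam * wordLenOn S (z ^ n) + lam) (e : E) :
    BddBelow (Set.range fun k : ℤ => (k : ℝ) + lam * wordLenOn S (z ^ (-k) * e)) := by
  refine ⟨-(lam * wordLenOn S e + lam), ?_⟩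
  rintro _ ⟨k, rfl⟩
  have hzk : wordLenOn S (z ^ k) ≤ wordLenOn S e + wordLenOn S (z ^ (-k) * e) :=
    calc wordLenOn S (z ^ k) = wordLenOn S (e * (z ^ (-k) * e)⁻¹) := by group
      _ ≤ wordLenOn S e + wordLenOn S (z ^ (-k) * e)⁻¹ := wordLenOn_mul_le hS _ _
      _ ≤ wordLenOn S e + wordLenOn S (z ^ (-k) * e) :=
        Nat.add_le_add_left (wordLenOn_inv_le hSsym hS _) _
  have hzk' : lam * wordLenOn S (z ^ k) ≤ lam * (wordLenOn S e + wordLenOn S (z ^ (-k) * e)) :=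
    mul_le_mul_of_nonneg_left (by exact_mod_cast hzk) hlam
  linarith [neg_abs_le (k : ℝ), hundist k]

lemma fiberCoord_le_of_wordLenOn_le {e e' : E} {c : ℝ} (hlam : 0 ≤ lam)
    (hbdd : BddBelow (Set.range fun k : ℤ => (k : ℝ) + lam * wordLenOn S (z ^ (-k) * e)))
    (h : ∀ k : ℤ, (wordLenOn S (z ^ (-k) * e) : ℝ) ≤ wordLenOn S (z ^ (-k) * e') + c) :
    fiberCoord S lam z e ≤ fiberCoord S lam z e' + lam * c :=
  le_ciInf_add fun k =>
    ciInf_le_of_le hbdd k (by linarith [mul_le_mul_of_nonneg_left (h k) hlam])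

lemma fiberCoord_mul_zpow (hz : ∀ e, Commute z e) (hSsym : ∀ s ∈ S, s⁻¹ ∈ S)
    (hS : Submonoid.closure S = ⊤) (hlam : 0 ≤ lam)
    (hundist : ∀ n : ℤ, (|n| : ℝ) ≤ lam * wordLenOn S (z ^ n) + lam) (e : E) (m : ℤ) :
    fiberCoord S lam z (e * z ^ m) = fiberCoord S lam z e + m := by
  rw [fiberCoord, fiberCoord, ciInf_add (bddBelow_fiberCoord hSsym hS hlam hundist e),
    ← (Equiv.addRight m).iInf_comp]
  refine iInf_congr fun k => ?_
  have hshift : z ^ (-(k + m)) * (e * z ^ m) = z ^ (-k) * e := by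
    rw [← ((hz e).zpow_left m).eq, ← mul_assoc, ← zpow_add, neg_add, neg_add_cancel_right]
  rw [Equiv.coe_addRight, hshift, Int.cast_add]
  ring

lemma fiberCoord_mul_left_le (hz : ∀ e, Commute z e) (hSsym : ∀ s ∈ S, s⁻¹ ∈ S)
    (hS : Submonoid.closure S = ⊤) (hlam : 0 ≤ lam)
    (hundist : ∀ n : ℤ, (|n| : ℝ) ≤ lam * wordLenOn S (z ^ n) + lam) (x e : E) :
    fiberCoord S lam z (x * e) ≤ fiberCoord S lam z e + lam * wordLenOn S x := by
  refine fiberCoord_le_of_wordLenOn_le hlam (bddBelow_fiberCoord hSsym hS hlam hundist _)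
    fun k => ?_
  rw [← mul_assoc, ((hz x).zpow_left (-k)).eq, mul_assoc, add_comm]
  exact_mod_cast wordLenOn_mul_le hS _ _

lemma fiberCoord_mul_right_le (hSsym : ∀ s ∈ S, s⁻¹ ∈ S) (hS : Submonoid.closure S = ⊤)
    (hlam : 0 ≤ lam) (hundist : ∀ n : ℤ, (|n| : ℝ) ≤ lam * wordLenOn S (z ^ n) + lam) (x e : E) :
    fiberCoord S lam z (e * x) ≤ fiberCoord S lam z e + lam * wordLenOn S x := by
  refine fiberCoord_le_of_wordLenOn_le hlam (bddBelow_fiberCoord hSsym hS hlam hundist _)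
    fun k => ?_
  rw [← mul_assoc]
  exact_mod_cast wordLenOn_mul_le hS _ _

lemma abs_fiberCoord_mul_left_sub_le (hz : ∀ e, Commute z e) (hSsym : ∀ s ∈ S, s⁻¹ ∈ S)
    (hS : Submonoid.closure S = ⊤) (hlam : 0 ≤ lam)
    (hundist : ∀ n : ℤ, (|n| : ℝ) ≤ lam * wordLenOn S (z ^ n) + lam) (x e : E) :
    |fiberCoord S lam z (x * e) - fiberCoord S lam z e| ≤ lam * wordLenOn S x := by
  have hback := fiberCoord_mul_left_le hz hSsym hS hlam hundist x⁻¹ (x * e)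
  have hinv : lam * wordLenOn S x⁻¹ ≤ lam * wordLenOn S x :=
    mul_le_mul_of_nonneg_left (by exact_mod_cast wordLenOn_inv_le hSsym hS x) hlam
  rw [inv_mul_cancel_left] at hback
  rw [abs_sub_le_iff]
  constructor <;> linarith [fiberCoord_mul_left_le hz hSsym hS hlam hundist x e]

lemma abs_fiberCoord_mul_right_sub_le (hSsym : ∀ s ∈ S, s⁻¹ ∈ S) (hS : Submonoid.closure S = ⊤)
    (hlam : 0 ≤ lam) (hundist : ∀ n : ℤ, (|n| : ℝ) ≤ lam * wordLenOn S (z ^ n) + lam) (x e : E) :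
    |fiberCoord S lam z (e * x) - fiberCoord S lam z e| ≤ lam * wordLenOn S x := by
  have hback := fiberCoord_mul_right_le hSsym hS hlam hundist x⁻¹ (e * x)
  have hinv : lam * wordLenOn S x⁻¹ ≤ lam * wordLenOn S x :=
    mul_le_mul_of_nonneg_left (by exact_mod_cast wordLenOn_inv_le hSsym hS x) hlam
  rw [mul_inv_cancel_right] at hback
  rw [abs_sub_le_iff]
  constructor <;> linarith [fiberCoord_mul_right_le hSsym hS hlam hundist x e]

end FiberCoord

section Extension

variable {E G : Type*} [Group E] [Group G] {z : E} {φ : E → ℝ}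

lemma eq_zpow_of_map_add {ι : ℤ → E} (hhom : ∀ m n : ℤ, ι (m + n) = ι m * ι n) (n : ℤ) :
    ι n = ι 1 ^ n :=
  MonoidHom.apply_mint E (MonoidHom.mk' (fun k => ι k.toAdd) hhom) (Multiplicative.ofAdd n)

lemma exists_section_mem_Ico (π : E →* G) (hπ : Function.Surjective π) (hπz : π z = 1)
    (hφ : ∀ (e : E) (m : ℤ), φ (e * z ^ m) = φ e + m) :
    ∃ s : G → E, (∀ g, π (s g) = g) ∧ ∀ g, φ (s g) ∈ Set.Ico 0 1 := by
  choose t ht using hπ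
  refine ⟨fun g => t g * z ^ (-⌊φ (t g)⌋), fun g => by simp [ht, hπz], fun g => ?_⟩
  rw [hφ, Int.cast_neg, ← sub_eq_add_neg, Int.self_sub_floor]
  exact ⟨Int.fract_nonneg _, Int.fract_lt_one _⟩

lemma eq_sub_of_zpow_eq_mul_inv (hz : ∀ e, Commute z e)
    (hφ : ∀ (e : E) (m : ℤ), φ (e * z ^ m) = φ e + m) {n : ℤ} {x y : E} (h : z ^ n = x * y⁻¹) :
    (n : ℝ) = φ x - φ y := by
  have hx : x = y * z ^ n := by rw [← ((hz y).zpow_left n).eq, h, inv_mul_cancel_right]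
  rw [hx, hφ]
  ring

end Extension

lemma abs_sub_le_add_one_of_mem_Ico {a b c C : ℝ} (hab : |a - b| ≤ C) (hb : b ∈ Set.Ico 0 1)
    (hc : c ∈ Set.Ico 0 1) : |a - c| ≤ C + 1 :=
  (abs_sub_le a b c).trans (add_le_add hab (abs_sub_lt_of_nonneg_of_lt hb.1 hb.2 hc.1 hc.2).le)

theorem weakly_bounded_euler_class_of_undistorted_general {E Gq : Type*} [Group E] [Group Gq]
    (ι : ℤ → E) (π : E →* Gq)
    (hhom : ∀ m n : ℤ, ι (m + n) = ι m * ι n)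
    (hcentral : ∀ n : ℤ, ∀ e : E, ι n * e = e * ι n)
    (hsurj : Function.Surjective π)
    (hexact : ∀ e : E, π e = 1 ↔ ∃ n : ℤ, ι n = e)
    (S : Set E) (hSsym : ∀ s ∈ S, s⁻¹ ∈ S)
    (hSgen : Subgroup.closure S = ⊤)
    (lam : ℝ) (hlam : 1 ≤ lam)
    (hundist : ∀ n : ℤ, (|n| : ℝ) ≤ lam * (wordLenOn S (ι n) : ℝ) + lam) :
    ∃ s : Gq → E, (∀ g : Gq, π (s g) = g) ∧
      ∃ ωs : Gq → Gq → ℤ,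
        (∀ g₁ g₂ : Gq, ι (ωs g₁ g₂) = s g₁ * s g₂ * (s (g₁ * g₂))⁻¹) ∧
        ∃ ω : Gq → Gq → ℤ, ∃ b : Gq → ℤ,
          (∀ g₁ g₂ : Gq, ω g₁ g₂ = ωs g₁ g₂ + b g₁ + b g₂ - b (g₁ * g₂)) ∧
          (∀ g : Gq, ∃ Bnd : ℤ, (∀ h : Gq, |ω g h| ≤ Bnd) ∧ (∀ h : Gq, |ω h g| ≤ Bnd)) := by
  have hι : ∀ n, ι n = ι 1 ^ n := eq_zpow_of_map_add hhom
  have hS := submonoid_closure_eq_top_of_inv_mem hSsym hSgen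
  have hlam0 : 0 ≤ lam := zero_le_one.trans hlam
  have hundist' : ∀ n : ℤ, (|n| : ℝ) ≤ lam * wordLenOn S (ι 1 ^ n) + lam := fun n =>
    hι n ▸ hundist n
  set φ := fiberCoord S lam (ι 1)
  have hφ := fiberCoord_mul_zpow (hcentral 1) hSsym hS hlam0 hundist'
  obtain ⟨s, hπs, hs⟩ := exists_section_mem_Ico π hsurj ((hexact _).2 ⟨1, rfl⟩) hφ
  choose ω hω using fun g h => (hexact (s g * s h * (s (g * h))⁻¹)).1 (by simp [hπs])
  have hωφ (g h : Gq) : (ω g h : ℝ) = φ (s g * s h) - φ (s (g * h)) :=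
    eq_sub_of_zpow_eq_mul_inv (hcentral 1) hφ ((hι _).symm.trans (hω g h))
  refine ⟨s, hπs, ω, hω, ω, 0, fun _ _ => by simp, fun g =>
    ⟨⌈lam * wordLenOn S (s g) + 1⌉, fun h => ?_, fun h => ?_⟩⟩
  all_goals refine Int.cast_le.1 (le_trans ?_ (Int.le_ceil _)); rw [Int.cast_abs, hωφ]
  · exact abs_sub_le_add_one_of_mem_Ico
      (abs_fiberCoord_mul_left_sub_le (hcentral 1) hSsym hS hlam0 hundist' _ _) (hs h) (hs _)
  · exact abs_sub_le_add_one_of_mem_Ico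
      (abs_fiberCoord_mul_right_sub_le hSsym hS hlam0 hundist' _ _) (hs h) (hs _)

/-- If `1 → ℤ → E → G → 1` is a central extension with `E` finitely generated and the
central copy of `ℤ` undistorted in `E`, then the Euler class of the extension is weakly
bounded: some 2-cocycle representing it (i.e. differing from a section cocycle `ω_s` by a
coboundary) is weakly bounded. -/
theorem weakly_bounded_euler_class_of_undistorted {E Gq : Type*} [Group E] [Group Gq]
    (ι : ℤ → E) (π : E →* Gq)
    (hhom : ∀ m n : ℤ, ι (m + n) = ι m * ι n)
    (hinj : Function.Injective ι)
    (hcentral : ∀ n : ℤ, ∀ e : E, ι n * e = e * ι n)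
    (hsurj : Function.Surjective π)
    (hexact : ∀ e : E, π e = 1 ↔ ∃ n : ℤ, ι n = e)
    (S : Set E) (hSfin : S.Finite) (hSsym : ∀ s ∈ S, s⁻¹ ∈ S)
    (hSgen : Subgroup.closure S = ⊤)
    (lam : ℝ) (hlam : 1 ≤ lam)
    (hundist : ∀ n : ℤ, (|n| : ℝ) ≤ lam * (wordLenOn S (ι n) : ℝ) + lam) :
    ∃ s : Gq → E, (∀ g : Gq, π (s g) = g) ∧
      ∃ ωs : Gq → Gq → ℤ,
        (∀ g₁ g₂ : Gq, ι (ωs g₁ g₂) = s g₁ * s g₂ * (s (g₁ * g₂))⁻¹) ∧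
        ∃ ω : Gq → Gq → ℤ, ∃ b : Gq → ℤ,
          (∀ g₁ g₂ : Gq, ω g₁ g₂ = ωs g₁ g₂ + b g₁ + b g₂ - b (g₁ * g₂)) ∧
          (∀ g : Gq, ∃ Bnd : ℤ, (∀ h : Gq, |ω g h| ≤ Bnd) ∧ (∀ h : Gq, |ω h g| ≤ Bnd)) :=
  weakly_bounded_euler_class_of_undistorted_general ι π hhom hcentral hsurj hexact S hSsym hSgen lam
    hlam hundist
end
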